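/- arXiv:2601.16879 — 4 statements merged into one kernel-verified Lean document; each statement's English description precedes it below -/
import Mathlib

section
/- (Affine Gap Lemma) Let A be a diagonal n×n matrix with diagonal entries β₁₁,…,βₙₙ ∈ (0,1) and let C₁, C₂ ⊆ B[0,1] be nonempty compact sets which form a strongly refinable pair for A. If τ_A(C₁) + τ_A(C₂) > 0, then C₁ ∩ C₂ ≠ ∅. -/
open Metric Set Topology Filter
open scoped ENNReal Classical

noncomputable section

/-- The affine box `A^s(B[0,1]) + z`, where `A` is the diagonal matrix with
diagonal entries `β j`, so `A^s(B[0,1]) + z = {x : |x j - z j| ≤ (β j)^s for all j}`. -/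
def affBox {n : ℕ} (β : Fin n → ℝ) (s : ℝ) (z : Fin n → ℝ) : Set (Fin n → ℝ) :=
  {x | ∀ j, |x j - z j| ≤ (β j) ^ s}

/-- The size `S_A(F)` of `F` with respect to the diagonal matrix with entries `β`. -/
def sizeWrt {n : ℕ} (β : Fin n → ℝ) (F : Set (Fin n → ℝ)) : ℝ :=
  sInf {t | 0 < t ∧ ∃ z, F ⊆ affBox β (1 / t) z}

/-- `G` is a gap (a connected component of the complement) of `C`. -/
def IsGap {n : ℕ} (C G : Set (Fin n → ℝ)) : Prop :=
  ∃ x ∈ Cᶜ, G = connectedComponentIn Cᶜ x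

/-- `G` is a bounded gap of `C`. -/
def IsBoundedGap {n : ℕ} (C G : Set (Fin n → ℝ)) : Prop :=
  IsGap C G ∧ Bornology.IsBounded G

/-- The unbounded gap `E` of `C`: the union of the unbounded connected
components of the complement of `C`. -/
def unboundedGap {n : ℕ} (C : Set (Fin n → ℝ)) : Set (Fin n → ℝ) :=
  {x | x ∈ Cᶜ ∧ ¬ Bornology.IsBounded (connectedComponentIn Cᶜ x)}

/-- An enumeration `(G_k)_{k ∈ J}` of the bounded gaps of `C`, in non-increasing
order of size with respect to `β`. -/
structure GapEnum {n : ℕ} (β : Fin n → ℝ) (C : Set (Fin n → ℝ)) where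
  J : Set ℕ
  G : ℕ → Set (Fin n → ℝ)
  downward : ∀ k l : ℕ, k ≤ l → l ∈ J → k ∈ J
  isGap : ∀ k ∈ J, IsBoundedGap C (G k)
  inj : ∀ k ∈ J, ∀ l ∈ J, G k = G l → k = l
  surj : ∀ G', IsBoundedGap C G' → ∃ k ∈ J, G k = G'
  anti : ∀ k ∈ J, ∀ l ∈ J, k ≤ l → sizeWrt β (G l) ≤ sizeWrt β (G k)

/-- The gap distance `GD_A(m, C)` with respect to the enumeration `e`. -/
def gapDist {n : ℕ} (β : Fin n → ℝ) (C : Set (Fin n → ℝ)) (e : GapEnum β C) (m : ℕ) : ℝ :=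
  sInf {t | 0 < t ∧ ∃ z, (affBox β (1 / t) z ∩ e.G m).Nonempty ∧
    (affBox β (1 / t) z ∩ ((⋃ i ∈ e.J ∩ Iio m, e.G i) ∪ unboundedGap C)).Nonempty}

/-- Extended-real-valued inverse, with `0⁻¹ = ∞`. -/
def invE (s : ℝ) : EReal := if s = 0 then ⊤ else ((s⁻¹ : ℝ) : EReal)

/-- Affine thickness `τ_A(C)` of `C` with respect to the diagonal matrix with entries `β`,
computed from the enumeration `e` of the bounded gaps of `C`. -/
def thicknessA {n : ℕ} (β : Fin n → ℝ) (C : Set (Fin n → ℝ)) (e : GapEnum β C) : EReal :=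
  if e.J = ∅ then (if (interior C).Nonempty then ⊤ else ⊥)
  else if ∃ k ∈ e.J, gapDist β C e k = 0 then ⊥
  else ⨅ k ∈ e.J, (invE (sizeWrt β (e.G k)) - invE (gapDist β C e k))

/-- Open sets `U`, `V` are linked. -/
def Linked {n : ℕ} (U V : Set (Fin n → ℝ)) : Prop :=
  (U ∩ V).Nonempty ∧ (frontier U \ V).Nonempty ∧ (frontier V \ U).Nonempty

/-- Compact sets `C₁`, `C₂` are BG linked. -/
def BGLinked {n : ℕ} (C₁ C₂ : Set (Fin n → ℝ)) : Prop :=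
  ∀ G₁ G₂, IsBoundedGap C₁ G₁ → IsBoundedGap C₂ G₂ → Linked G₁ G₂ ∨ G₁ ∩ G₂ = ∅

/-- `C₁, C₂ ⊆ B[0,1]` are a strongly refinable pair for the diagonal matrix with entries `β`. -/
def StronglyRefinable {n : ℕ} (β : Fin n → ℝ) (C₁ C₂ : Set (Fin n → ℝ)) : Prop :=
  ∃ C₁' C₂' : Set (Fin n → ℝ), IsCompact C₁' ∧ IsCompact C₂' ∧
    C₁' ⊆ closedBall 0 1 ∧ C₂' ⊆ closedBall 0 1 ∧
    BGLinked C₁' C₂' ∧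
    (∃ G₁, IsBoundedGap C₁' G₁ ∧ ¬ frontier G₁ ⊆ unboundedGap C₂') ∧
    (∃ G₂, IsBoundedGap C₂' G₂ ∧ ¬ frontier G₂ ⊆ unboundedGap C₁') ∧
    (∀ e₁ : GapEnum β C₁, ∀ e₂ : GapEnum β C₂, ∃ e₁' : GapEnum β C₁', ∃ e₂' : GapEnum β C₂',
      thicknessA β C₁ e₁ + thicknessA β C₂ e₂ ≤ thicknessA β C₁' e₁' + thicknessA β C₂' e₂') ∧
    C₁' ∩ C₂' ⊆ C₁ ∩ C₂

/-- The distance between two sets. -/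
def setDist {n : ℕ} (A B : Set (Fin n → ℝ)) : ℝ :=
  sInf {r | ∃ a ∈ A, ∃ b ∈ B, r = dist a b}

/-- An enumeration of the bounded gaps of `C` in non-increasing order of diameter. -/
structure DiamEnum {n : ℕ} (C : Set (Fin n → ℝ)) where
  J : Set ℕ
  G : ℕ → Set (Fin n → ℝ)
  downward : ∀ k l : ℕ, k ≤ l → l ∈ J → k ∈ J
  isGap : ∀ k ∈ J, IsBoundedGap C (G k)
  inj : ∀ k ∈ J, ∀ l ∈ J, G k = G l → k = l
  surj : ∀ G', IsBoundedGap C G' → ∃ k ∈ J, G k = G'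
  anti : ∀ k ∈ J, ∀ l ∈ J, k ≤ l → Metric.diam (G l) ≤ Metric.diam (G k)

/-- The Falconer–Yavicoli thickness `τ(C)`, computed from the enumeration `e` of
the bounded gaps of `C` in non-increasing order of diameter. -/
def FYthickness {n : ℕ} (C : Set (Fin n → ℝ)) (e : DiamEnum C) : ℝ≥0∞ :=
  if e.J = ∅ then (if (interior C).Nonempty then ⊤ else 0)
  else ⨅ k ∈ e.J, ENNReal.ofReal
    (setDist (e.G k) (unboundedGap C ∪ ⋃ j ∈ e.J ∩ Iio k, e.G j) / Metric.diam (e.G k))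

end

noncomputable section AGLaux
namespace AGL
open Metric Set Topology Filter
open scoped Classical
variable {n : ℕ}

lemma isClosed_affBox (β : Fin n → ℝ) (s : ℝ) (z : Fin n → ℝ) : IsClosed (affBox β s z) := by
  have h : affBox β s z = ⋂ j, {x : Fin n → ℝ | |x j - z j| ≤ (β j) ^ s} := by
    ext x; simp [affBox, Set.mem_iInter]
  rw [h]
  exact isClosed_iInter fun j =>
    isClosed_le (((continuous_apply j).sub continuous_const).abs) continuous_const

lemma unbounded_of_coord_gt (D : Set (Fin n → ℝ)) (hD : D ⊆ closedBall 0 1)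
    {y : Fin n → ℝ} {j : Fin n} (hy : 1 < |y j|) :
    y ∈ Dᶜ ∧ ¬ Bornology.IsBounded (connectedComponentIn Dᶜ y) := by
  classical
  set c : ℝ := if 0 ≤ y j then 1 else -1 with hc
  set f : ℝ → (Fin n → ℝ) := fun s => y + s • (Pi.single j c : Fin n → ℝ) with hf
  have hfj : ∀ s, f s j = y j + s * c := by
    intro s; simp [hf, Pi.single_eq_same]
  have habs : ∀ s : ℝ, 0 ≤ s → |y j| + s ≤ |f s j| := by
    intro s hs
    rw [hfj]
    by_cases h0 : 0 ≤ y j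
    · have : c = 1 := by simp [hc, h0]
      rw [this]
      have : 0 ≤ y j + s * 1 := by nlinarith
      rw [abs_of_nonneg h0, abs_of_nonneg this]; nlinarith
    · push_neg at h0
      have : c = -1 := by simp [hc, not_le.2 h0]
      rw [this]
      have h1 : y j + s * (-1) < 0 := by nlinarith
      rw [abs_of_neg h0, abs_of_neg h1]; nlinarith
  have hout : ∀ s : ℝ, 0 ≤ s → f s ∉ D := by
    intro s hs hmem
    have h1 : dist (f s) 0 ≤ 1 := by simpa [mem_closedBall] using hD hmem
    have h2 : dist (f s j) ((0 : Fin n → ℝ) j) ≤ dist (f s) 0 := dist_le_pi_dist _ _ j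
    have h3 : |f s j| ≤ 1 := by
      simpa [Real.dist_eq] using h2.trans h1
    have := habs s hs
    nlinarith [abs_nonneg (y j)]
  have hconn : IsPreconnected (f '' Ici 0) := by
    apply IsPreconnected.image isPreconnected_Ici
    apply Continuous.continuousOn
    exact continuous_const.add (continuous_id.smul continuous_const)
  have hy0 : y = f 0 := by simp [hf]
  have hyD : y ∉ D := by rw [hy0]; exact hout 0 le_rfl
  have hsub : f '' Ici 0 ⊆ Dᶜ := by
    rintro _ ⟨s, hs, rfl⟩; exact hout s hs
  have hysub : f '' Ici 0 ⊆ connectedComponentIn Dᶜ y := by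
    apply hconn.subset_connectedComponentIn _ hsub
    exact ⟨0, Set.mem_Ici.2 le_rfl, hy0.symm⟩
  refine ⟨hyD, fun hb => ?_⟩
  obtain ⟨r, hr⟩ := (Metric.isBounded_iff_subset_closedBall 0).1 hb
  have hs0 : (0:ℝ) ≤ |r| + 1 := by positivity
  have hmem : f (|r| + 1) ∈ closedBall (0 : Fin n → ℝ) r :=
    hr (hysub ⟨|r| + 1, hs0, rfl⟩)
  have h2 : dist (f (|r|+1) j) ((0 : Fin n → ℝ) j) ≤ r := le_trans (dist_le_pi_dist _ _ j) (by simpa [mem_closedBall] using hmem)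
  have h3 := habs (|r|+1) hs0
  simp only [Pi.zero_apply, Real.dist_eq, sub_zero] at h2
  nlinarith [abs_nonneg (y j), le_abs_self r]

lemma frontier_gap_subset {D G : Set (Fin n → ℝ)} (hD : IsClosed D) (hG : IsGap D G) :
    frontier G ⊆ D := by
  obtain ⟨x, hx, rfl⟩ := hG
  intro y hy
  by_contra hyD
  have hU : IsOpen Dᶜ := hD.isOpen_compl
  have hopen : IsOpen (connectedComponentIn Dᶜ x) := hU.connectedComponentIn
  have hyG : y ∉ connectedComponentIn Dᶜ x := by
    intro h
    have : y ∈ interior (connectedComponentIn Dᶜ x) := by rwa [hopen.interior_eq]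
    exact hy.2 this
  have hycl : y ∈ closure (connectedComponentIn Dᶜ x) := hy.1
  have hopeny : IsOpen (connectedComponentIn Dᶜ y) := hU.connectedComponentIn
  have hymem : y ∈ connectedComponentIn Dᶜ y := mem_connectedComponentIn hyD
  obtain ⟨z, hz1, hz2⟩ := _root_.mem_closure_iff.1 hycl _ hopeny hymem
  have e1 : connectedComponentIn Dᶜ y = connectedComponentIn Dᶜ z := connectedComponentIn_eq hz1
  have e2 : connectedComponentIn Dᶜ x = connectedComponentIn Dᶜ z := connectedComponentIn_eq hz2
  exact hyG (by rw [e2, ← e1]; exact hymem)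

lemma boundedGap_subset_ball {D G : Set (Fin n → ℝ)} (hD : D ⊆ closedBall 0 1)
    (hG : IsBoundedGap D G) : G ⊆ closedBall 0 1 := by
  obtain ⟨⟨x, hx, rfl⟩, hb⟩ := hG
  intro y hy
  by_contra hyb
  rw [mem_closedBall] at hyb
  push_neg at hyb
  obtain ⟨j, hj⟩ : ∃ j, 1 < dist (y j) ((0 : Fin n → ℝ) j) := by
    by_contra hall
    push_neg at hall
    exact absurd (dist_pi_le_iff zero_le_one |>.2 hall) (not_le.2 hyb)
  have hj' : 1 < |y j| := by simpa [Real.dist_eq] using hj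
  have := (unbounded_of_coord_gt D hD hj').2
  have heq : connectedComponentIn Dᶜ x = connectedComponentIn Dᶜ y := connectedComponentIn_eq hy
  rw [heq] at hb
  exact this hb

lemma frontier_nonempty_of_bounded (hn : 0 < n) {G : Set (Fin n → ℝ)} (ho : IsOpen G)
    (hb : Bornology.IsBounded G) (hne : G.Nonempty) : (frontier G).Nonempty := by
  by_contra h
  rw [Set.not_nonempty_iff_eq_empty] at h
  have hclopen : IsClopen G := isClopen_iff_frontier_eq_empty.2 h
  have huniv := hclopen.eq_univ hne
  obtain ⟨r, hr⟩ := (Metric.isBounded_iff_subset_closedBall 0).1 hb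
  let j : Fin n := ⟨0, hn⟩
  have hmem : (Pi.single j (|r| + 1) : Fin n → ℝ) ∈ closedBall (0 : Fin n → ℝ) r := by
    apply hr; rw [huniv]; trivial
  have h2 : dist ((Pi.single j (|r|+1) : Fin n → ℝ) j) ((0 : Fin n → ℝ) j) ≤ r :=
    le_trans (dist_le_pi_dist _ _ j) (by simpa [mem_closedBall] using hmem)
  simp only [Pi.single_eq_same, Pi.zero_apply, Real.dist_eq, sub_zero] at h2
  have h3 : |(|r| + 1)| = |r| + 1 := abs_of_nonneg (by positivity)
  rw [h3] at h2
  nlinarith [le_abs_self r]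

lemma sizeWrt_nonneg (β : Fin n → ℝ) (F : Set (Fin n → ℝ)) : 0 ≤ sizeWrt β F :=
  Real.sInf_nonneg (fun _ ht => ht.1.le)

lemma gapDist_nonneg (β : Fin n → ℝ) (D : Set (Fin n → ℝ)) (e : GapEnum β D) (m : ℕ) :
    0 ≤ gapDist β D e m :=
  Real.sInf_nonneg (fun _ ht => ht.1.le)

lemma gapDist_le_aux {β : Fin n → ℝ} {D : Set (Fin n → ℝ)} (e : GapEnum β D) (m : ℕ)
    (F : Set (Fin n → ℝ))
    (hne : {t | 0 < t ∧ ∃ z, F ⊆ affBox β (1/t) z}.Nonempty)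
    (hp : ∃ p, p ∈ F ∧ p ∈ e.G m)
    (hw : ∃ w ∈ closure F, w ∈ (⋃ i ∈ e.J ∩ Iio m, e.G i) ∪ unboundedGap D) :
    gapDist β D e m ≤ sizeWrt β F := by
  obtain ⟨p, hp1, hp2⟩ := hp
  obtain ⟨w, hw1, hw2⟩ := hw
  apply csInf_le_csInf ⟨0, fun t ht => le_of_lt ht.1⟩ hne
  rintro t ⟨ht, z, hz⟩
  exact ⟨ht, z, ⟨p, hz hp1, hp2⟩, ⟨w, closure_minimal hz (isClosed_affBox β _ z) hw1, hw2⟩⟩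

lemma exists_rpow_gt {b c : ℝ} (hb : b ∈ Set.Ioo (0:ℝ) 1) (hc0 : 0 ≤ c) (hc1 : c < 1) :
    ∃ ε : ℝ, 0 < ε ∧ c < b ^ ε := by
  obtain ⟨m, hm⟩ := exists_pow_lt_of_lt_one hb.1 hc1
  have hcM : c ^ (m+1) < b := lt_of_le_of_lt (pow_le_pow_of_le_one hc0 hc1.le (Nat.le_succ m)) hm
  refine ⟨((m+1:ℕ):ℝ)⁻¹, by positivity, ?_⟩
  have h1 : ((c ^ (m+1) : ℝ)) ^ (((m+1:ℕ):ℝ)⁻¹) < b ^ (((m+1:ℕ):ℝ)⁻¹) :=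
    Real.rpow_lt_rpow (by positivity) hcM (by positivity)
  rwa [← Real.rpow_natCast c (m+1), ← Real.rpow_mul hc0,
    mul_inv_cancel₀ (by exact_mod_cast (Nat.succ_ne_zero m)), Real.rpow_one] at h1

lemma box_small (hn : 0 < n) {β : Fin n → ℝ} (hβ : ∀ j, β j ∈ Set.Ioo (0:ℝ) 1) {ε : ℝ}
    (hε : 0 < ε) :
    ∃ σ : ℝ, 0 < σ ∧ ∀ t, 0 < t → t ≤ σ → ∀ z x y, x ∈ affBox β (1/t) z →
      y ∈ affBox β (1/t) z → dist x y ≤ ε := by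
  have hhalf : (0:ℝ) < ε/2 := by positivity
  have hex : ∀ j : Fin n, ∃ m : ℕ, (β j) ^ m < ε/2 := fun j =>
    exists_pow_lt_of_lt_one hhalf (hβ j).2
  choose Nf hNf using hex
  set N := Finset.univ.sup Nf with hN
  refine ⟨((N:ℝ)+1)⁻¹, by positivity, ?_⟩
  intro t ht htσ z x y hx hy
  have hβle : ∀ j, (β j) ^ (1/t : ℝ) ≤ ε/2 := by
    intro j
    have h1 : ((N:ℝ)) ≤ 1/t := by
      have h2 := one_div_le_one_div_of_le ht htσ
      rw [one_div, inv_inv] at h2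
      linarith
    calc (β j) ^ (1/t : ℝ) ≤ (β j) ^ ((N:ℝ)) :=
          Real.rpow_le_rpow_of_exponent_ge (hβ j).1 (hβ j).2.le h1
    _ = (β j) ^ (N:ℕ) := Real.rpow_natCast _ N
    _ ≤ (β j) ^ (Nf j) := pow_le_pow_of_le_one (hβ j).1.le (hβ j).2.le (Finset.le_sup (Finset.mem_univ j))
    _ ≤ ε/2 := (hNf j).le
  have hxz : dist x z ≤ ε/2 := by
    rw [dist_pi_le_iff hhalf.le]
    intro j; rw [Real.dist_eq]; exact (hx j).trans (hβle j)
  have hyz : dist y z ≤ ε/2 := by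
    rw [dist_pi_le_iff hhalf.le]
    intro j; rw [Real.dist_eq]; exact (hy j).trans (hβle j)
  calc dist x y ≤ dist x z + dist z y := dist_triangle _ _ _
  _ ≤ ε/2 + ε/2 := by rw [dist_comm z y]; linarith
  _ = ε := by ring

lemma size_pos (hn : 0 < n) {β : Fin n → ℝ} (hβ : ∀ j, β j ∈ Set.Ioo (0:ℝ) 1)
    {D : Set (Fin n → ℝ)} (hD : IsCompact D) (hDb : D ⊆ closedBall 0 1)
    (e : GapEnum β D) {k : ℕ} (hk : k ∈ e.J) (hgd : gapDist β D e k ≠ 0) :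
    0 < sizeWrt β (e.G k) ∧ {t | 0 < t ∧ ∃ z, e.G k ⊆ affBox β (1/t) z}.Nonempty := by
  have hgap := e.isGap k hk
  have hGopen : IsOpen (e.G k) := by
    obtain ⟨x, hx, hxe⟩ := hgap.1
    rw [hxe]; exact (hD.isClosed.isOpen_compl).connectedComponentIn
  have hGne : (e.G k).Nonempty := by
    obtain ⟨x, hx, hxe⟩ := hgap.1
    rw [hxe]; exact connectedComponentIn_nonempty_iff.2 hx
  have hGball : e.G k ⊆ closedBall 0 1 := boundedGap_subset_ball hDb hgap
  have hGcoord : ∀ y ∈ e.G k, ∀ j, |y j| ≤ 1 := by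
    intro y hy j
    have h1 := hGball hy
    rw [mem_closedBall] at h1
    have h2 : dist (y j) ((0 : Fin n → ℝ) j) ≤ dist y 0 := dist_le_pi_dist _ _ j
    simpa [Real.dist_eq] using h2.trans h1
  have himne : ∀ j, ((fun y : Fin n → ℝ => y j) '' e.G k).Nonempty := fun j => hGne.image _
  have hbddA : ∀ j, BddAbove ((fun y : Fin n → ℝ => y j) '' e.G k) := by
    intro j; refine ⟨1, ?_⟩; rintro _ ⟨y, hy, rfl⟩
    exact (abs_le.1 (hGcoord y hy j)).2
  have hbddB : ∀ j, BddBelow ((fun y : Fin n → ℝ => y j) '' e.G k) := by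
    intro j; refine ⟨-1, ?_⟩; rintro _ ⟨y, hy, rfl⟩
    exact (abs_le.1 (hGcoord y hy j)).1
  set a : Fin n → ℝ := fun j => sSup ((fun y : Fin n → ℝ => y j) '' e.G k) with ha
  set b : Fin n → ℝ := fun j => sInf ((fun y : Fin n → ℝ => y j) '' e.G k) with hbdef
  have hmemab : ∀ j, ∀ y ∈ e.G k, b j ≤ y j ∧ y j ≤ a j := by
    intro j y hy
    exact ⟨csInf_le (hbddB j) ⟨y, hy, rfl⟩, le_csSup (hbddA j) ⟨y, hy, rfl⟩⟩
  have hab : ∀ j, b j ≤ a j := by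
    intro j; obtain ⟨y, hy⟩ := hGne
    exact le_trans (hmemab j y hy).1 (hmemab j y hy).2
  have ha1 : ∀ j, a j ≤ 1 := by
    intro j
    apply csSup_le (himne j)
    rintro _ ⟨y, hy, rfl⟩; exact (abs_le.1 (hGcoord y hy j)).2
  have hb1 : ∀ j, -1 ≤ b j := by
    intro j
    apply le_csInf (himne j)
    rintro _ ⟨y, hy, rfl⟩; exact (abs_le.1 (hGcoord y hy j)).1
  have hne : {t | 0 < t ∧ ∃ z, e.G k ⊆ affBox β (1/t) z}.Nonempty := by
    by_cases hcase : ∀ j, a j - b j < 2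
    · have hc : ∀ j, ∃ ε : ℝ, 0 < ε ∧ (a j - b j)/2 < (β j) ^ ε := by
        intro j
        exact exists_rpow_gt (hβ j) (by linarith [hab j]) (by linarith [hcase j])
      choose εf hεf1 hεf2 using hc
      haveI : Nonempty (Fin n) := ⟨⟨0, hn⟩⟩
      set ε := Finset.univ.inf' Finset.univ_nonempty εf with hεdef
      have hεpos : 0 < ε := by
        rw [hεdef, Finset.lt_inf'_iff]
        exact fun j _ => hεf1 j
      refine ⟨1/ε, by positivity, fun j => (a j + b j)/2, ?_⟩
      intro y hy j
      have h1 : |y j - (a j + b j)/2| ≤ (a j - b j)/2 := by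
        obtain ⟨hb2, ha2⟩ := hmemab j y hy
        rw [abs_le]; constructor <;> linarith
      have h2 : (β j) ^ ((1:ℝ)/(1/ε)) = (β j) ^ ε := by rw [one_div_one_div]
      rw [h2]
      have h3 : (β j) ^ (εf j) ≤ (β j) ^ ε := by
        apply Real.rpow_le_rpow_of_exponent_ge (hβ j).1 (hβ j).2.le
        exact Finset.inf'_le εf (Finset.mem_univ j)
      linarith [hεf2 j]
    · push_neg at hcase
      obtain ⟨j, hj⟩ := hcase
      exfalso
      apply hgd
      have hgd0 : ∀ t : ℝ, 0 < t → gapDist β D e k ≤ t := by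
        intro t ht
        apply csInf_le ⟨0, fun s hs => hs.1.le⟩
        set r := (β j) ^ ((1:ℝ)/t) with hr
        have hrpos : 0 < r := Real.rpow_pos_of_pos (hβ j).1 _
        have haj : a j = 1 := le_antisymm (ha1 j) (by linarith [hb1 j])
        obtain ⟨v, ⟨y, hy, rfl⟩, hv⟩ :
            ∃ v ∈ ((fun y : Fin n → ℝ => y j) '' e.G k), 1 - r < v := by
          apply exists_lt_of_lt_csSup (himne j)
          rw [show sSup ((fun y : Fin n → ℝ => y j) '' e.G k) = a j from rfl, haj]
          linarith
        refine ⟨ht, y, ⟨y, ?_, hy⟩, ?_⟩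
        · intro i
          rw [sub_self, abs_zero]
          exact (Real.rpow_pos_of_pos (hβ i).1 _).le
        · refine ⟨Function.update y j (y j + r), ?_, Or.inr ?_⟩
          · intro i
            by_cases hij : i = j
            · subst hij
              rw [Function.update_self, show y i + r - y i = r by ring, abs_of_pos hrpos]
            · rw [Function.update_of_ne hij, sub_self, abs_zero]
              exact (Real.rpow_pos_of_pos (hβ i).1 _).le
          · have hyj1 : y j ≤ 1 := (abs_le.1 (hGcoord y hy j)).2
            have hqj : 1 < |Function.update y j (y j + r) j| := by
              rw [Function.update_self, abs_of_pos (by linarith)]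
              linarith
            exact unbounded_of_coord_gt D hDb hqj
      have h0 := gapDist_nonneg β D e k
      by_contra hne0
      have hpos : 0 < gapDist β D e k := lt_of_le_of_ne h0 (Ne.symm hne0)
      have := hgd0 (gapDist β D e k / 2) (by linarith)
      linarith
  refine ⟨?_, hne⟩
  have h0 := sizeWrt_nonneg β (e.G k)
  rcases h0.lt_or_eq with h | h
  · exact h
  exfalso
  obtain ⟨x, hx⟩ := hGne
  obtain ⟨δ, hδ, hball⟩ := Metric.isOpen_iff.1 hGopen x hx
  set j0 : Fin n := ⟨0, hn⟩
  set y := Function.update x j0 (x j0 + δ/2) with hydef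
  have hyx : dist y x ≤ δ/2 := by
    rw [dist_pi_le_iff (by positivity)]
    intro i
    by_cases hij : i = j0
    · subst hij
      rw [hydef, Function.update_self, Real.dist_eq]
      rw [show x j0 + δ/2 - x j0 = δ/2 by ring, abs_of_pos (by positivity)]
    · rw [hydef, Function.update_of_ne hij, dist_self]
      positivity
  have hymem : y ∈ e.G k := hball (lt_of_le_of_lt hyx (by linarith))
  have hxy : x ≠ y := by
    intro hxyeq
    have : x j0 = y j0 := by rw [hxyeq]
    rw [hydef, Function.update_self] at this
    linarith
  have hρ : 0 < dist x y := dist_pos.2 hxy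
  obtain ⟨σ, hσ, hbox⟩ := box_small hn hβ (show 0 < dist x y / 2 by positivity)
  have hlt : sInf {t | 0 < t ∧ ∃ z, e.G k ⊆ affBox β (1/t) z} < σ := by
    have heq : sizeWrt β (e.G k) = sInf {t | 0 < t ∧ ∃ z, e.G k ⊆ affBox β (1/t) z} := rfl
    rw [← heq, ← h]
    exact hσ
  obtain ⟨t, ⟨ht, z, hz⟩, htσ⟩ := exists_lt_of_csInf_lt hne hlt
  have := hbox t ht htσ.le z x y (hz hx) (hz hymem)
  linarith

lemma BGLinked_symm {C₁ C₂ : Set (Fin n → ℝ)} (h : BGLinked C₁ C₂) : BGLinked C₂ C₁ := by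
  intro G₂ G₁ h2 h1
  rcases h G₁ G₂ h1 h2 with hL | hE
  · exact Or.inl ⟨by rw [Set.inter_comm]; exact hL.1, hL.2.2, hL.2.1⟩
  · exact Or.inr (by rw [Set.inter_comm]; exact hE)

lemma stepR (hn : 0 < n) {β : Fin n → ℝ} (hβ : ∀ j, β j ∈ Set.Ioo (0:ℝ) 1)
    {D₁ D₂ : Set (Fin n → ℝ)} (h1 : IsCompact D₁) (h2 : IsCompact D₂)
    (hdis : D₁ ∩ D₂ = ∅) (hBG : BGLinked D₁ D₂) (hDb₂ : D₂ ⊆ closedBall 0 1)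
    (e₁ : GapEnum β D₁) (e₂ : GapEnum β D₂)
    {k l : ℕ} (hk : k ∈ e₁.J) (hl : l ∈ e₂.J) (hint : (e₁.G k ∩ e₂.G l).Nonempty)
    (hsz : {t | 0 < t ∧ ∃ z, e₁.G k ⊆ affBox β (1/t) z}.Nonempty) :
    ∃ l' ∈ e₂.J, (e₁.G k ∩ e₂.G l').Nonempty ∧ gapDist β D₂ e₂ l' ≤ sizeWrt β (e₁.G k) := by
  have hg1 := e₁.isGap k hk
  have hg2 := e₂.isGap l hl
  rcases hBG _ _ hg1 hg2 with hL | hE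
  swap
  · exact absurd hint (by rw [hE]; exact Set.not_nonempty_empty)
  obtain ⟨w, hwf, hwn⟩ := hL.2.1
  have hwD1 : w ∈ D₁ := frontier_gap_subset h1.isClosed hg1.1 hwf
  have hwD2 : w ∈ D₂ᶜ := fun hw => (Set.eq_empty_iff_forall_notMem.1 hdis w) ⟨hwD1, hw⟩
  obtain ⟨p, hp1, hp2⟩ := hint
  by_cases hbdd : Bornology.IsBounded (connectedComponentIn D₂ᶜ w)
  · obtain ⟨i, hi, hie⟩ := e₂.surj _ ⟨⟨w, hwD2, rfl⟩, hbdd⟩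
    have hwi : w ∈ e₂.G i := by rw [hie]; exact mem_connectedComponentIn hwD2
    have hiG : IsOpen (e₂.G i) := by
      rw [hie]; exact (h2.isClosed.isOpen_compl).connectedComponentIn
    have hil : i ≠ l := fun h => hwn (h ▸ hwi)
    have hqint : (e₁.G k ∩ e₂.G i).Nonempty := by
      obtain ⟨q, hq1, hq2⟩ := _root_.mem_closure_iff.1 (frontier_subset_closure hwf) _ hiG hwi
      exact ⟨q, hq2, hq1⟩
    rcases lt_or_gt_of_ne hil with hlt | hgt
    · refine ⟨l, hl, ⟨p, hp1, hp2⟩, ?_⟩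
      apply gapDist_le_aux e₂ l _ hsz ⟨p, hp1, hp2⟩
      exact ⟨w, frontier_subset_closure hwf, Or.inl (Set.mem_biUnion ⟨hi, hlt⟩ hwi)⟩
    · obtain ⟨q, hq1, hq2⟩ := hqint
      refine ⟨i, hi, ⟨q, hq1, hq2⟩, ?_⟩
      apply gapDist_le_aux e₂ i _ hsz ⟨q, hq1, hq2⟩
      exact ⟨p, subset_closure hp1, Or.inl (Set.mem_biUnion ⟨hl, hgt⟩ hp2)⟩
  · refine ⟨l, hl, ⟨p, hp1, hp2⟩, ?_⟩
    apply gapDist_le_aux e₂ l _ hsz ⟨p, hp1, hp2⟩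
    exact ⟨w, frontier_subset_closure hwf, Or.inr ⟨hwD2, hbdd⟩⟩

lemma separation {A B : Set (Fin n → ℝ)} (hA : IsCompact A) (hB : IsCompact B)
    (hAne : A.Nonempty) (hBne : B.Nonempty) (hd : A ∩ B = ∅) :
    ∃ d, 0 < d ∧ ∀ a ∈ A, ∀ b ∈ B, d ≤ dist a b := by
  obtain ⟨a0, ha0, hmin⟩ := hA.exists_isMinOn hAne (continuous_infDist_pt B).continuousOn
  have ha0B : a0 ∉ B := fun h => (Set.eq_empty_iff_forall_notMem.1 hd a0) ⟨ha0, h⟩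
  have hpos : 0 < infDist a0 B := (hB.isClosed.notMem_iff_infDist_pos hBne).1 ha0B
  exact ⟨infDist a0 B, hpos, fun a ha b hb => le_trans (hmin ha) (infDist_le_dist_of_mem hb)⟩

end AGL
end AGLaux

/-- the Affine Gap Lemma. -/
theorem affine_gap_lemma (n : ℕ)
    (β : Fin n → ℝ) (hβ : ∀ j, β j ∈ Set.Ioo (0 : ℝ) 1)
    (C₁ C₂ : Set (Fin n → ℝ)) (hC₁ : IsCompact C₁) (hC₂ : IsCompact C₂)
    (hne₁ : C₁.Nonempty) (hne₂ : C₂.Nonempty)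
    (hsub₁ : C₁ ⊆ closedBall 0 1) (hsub₂ : C₂ ⊆ closedBall 0 1)
    (hSR : StronglyRefinable β C₁ C₂)
    (e₁ : GapEnum β C₁) (e₂ : GapEnum β C₂)
    (hτ : 0 < thicknessA β C₁ e₁ + thicknessA β C₂ e₂) :
    (C₁ ∩ C₂).Nonempty := by
  classical
  obtain ⟨x₁, hx₁⟩ := hne₁
  obtain ⟨x₂, hx₂⟩ := hne₂
  rcases Nat.eq_zero_or_pos n with hn0 | hn
  · subst hn0
    exact ⟨x₁, hx₁, by rwa [Subsingleton.elim x₁ x₂]⟩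
  obtain ⟨D₁, D₂, hcomp₁, hcomp₂, hDb₁, hDb₂, hBG, ⟨Ga, hGa, hGaE⟩, ⟨Gb, hGb, hGbE⟩, hth, hsub⟩ :=
    hSR
  obtain ⟨f₁, f₂, hle⟩ := hth e₁ e₂
  have hτ' : (0:EReal) < thicknessA β D₁ f₁ + thicknessA β D₂ f₂ := lt_of_lt_of_le hτ hle
  rcases (D₁ ∩ D₂).eq_empty_or_nonempty with hdis | hS
  swap
  · exact Set.Nonempty.mono hsub hS
  exfalso
  obtain ⟨k₀', hk₀', hGa'⟩ := f₁.surj Ga hGa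
  obtain ⟨l₀'', hl₀'', hGb'⟩ := f₂.surj Gb hGb
  have hJ1 : f₁.J ≠ ∅ := fun h => (h ▸ hk₀' : k₀' ∈ (∅:Set ℕ))
  have hJ2 : f₂.J ≠ ∅ := fun h => (h ▸ hl₀'' : l₀'' ∈ (∅:Set ℕ))
  have hgd1 : ¬ ∃ k ∈ f₁.J, gapDist β D₁ f₁ k = 0 := by
    intro h
    have hbot : thicknessA β D₁ f₁ = ⊥ := by rw [thicknessA, if_neg hJ1, if_pos h]
    rw [hbot, EReal.bot_add] at hτ'
    simp at hτ'
  have hgd2 : ¬ ∃ k ∈ f₂.J, gapDist β D₂ f₂ k = 0 := by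
    intro h
    have hbot : thicknessA β D₂ f₂ = ⊥ := by rw [thicknessA, if_neg hJ2, if_pos h]
    rw [hbot, EReal.add_bot] at hτ'
    simp at hτ'
  have hT1 : thicknessA β D₁ f₁ =
      ⨅ k ∈ f₁.J, (invE (sizeWrt β (f₁.G k)) - invE (gapDist β D₁ f₁ k)) := by
    rw [thicknessA, if_neg hJ1, if_neg hgd1]
  have hT2 : thicknessA β D₂ f₂ =
      ⨅ k ∈ f₂.J, (invE (sizeWrt β (f₂.G k)) - invE (gapDist β D₂ f₂ k)) := by
    rw [thicknessA, if_neg hJ2, if_neg hgd2]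
  have hgdpos1 : ∀ k ∈ f₁.J, 0 < gapDist β D₁ f₁ k := by
    intro k hk
    rcases (AGL.gapDist_nonneg β D₁ f₁ k).lt_or_eq with h | h
    · exact h
    · exact absurd ⟨k, hk, h.symm⟩ hgd1
  have hgdpos2 : ∀ k ∈ f₂.J, 0 < gapDist β D₂ f₂ k := by
    intro k hk
    rcases (AGL.gapDist_nonneg β D₂ f₂ k).lt_or_eq with h | h
    · exact h
    · exact absurd ⟨k, hk, h.symm⟩ hgd2
  have hsz1 : ∀ k ∈ f₁.J, 0 < sizeWrt β (f₁.G k) ∧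
      {t | 0 < t ∧ ∃ z, f₁.G k ⊆ affBox β (1/t) z}.Nonempty := fun k hk =>
    AGL.size_pos hn hβ hcomp₁ hDb₁ f₁ hk (ne_of_gt (hgdpos1 k hk))
  have hsz2 : ∀ k ∈ f₂.J, 0 < sizeWrt β (f₂.G k) ∧
      {t | 0 < t ∧ ∃ z, f₂.G k ⊆ affBox β (1/t) z}.Nonempty := fun k hk =>
    AGL.size_pos hn hβ hcomp₂ hDb₂ f₂ hk (ne_of_gt (hgdpos2 k hk))
  have hterm1 : ∀ k ∈ f₁.J, (invE (sizeWrt β (f₁.G k)) - invE (gapDist β D₁ f₁ k)) =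
      (((sizeWrt β (f₁.G k))⁻¹ - (gapDist β D₁ f₁ k)⁻¹ : ℝ) : EReal) := by
    intro k hk
    rw [invE, invE, if_neg (ne_of_gt (hsz1 k hk).1), if_neg (ne_of_gt (hgdpos1 k hk)),
      ← EReal.coe_sub]
  have hterm2 : ∀ k ∈ f₂.J, (invE (sizeWrt β (f₂.G k)) - invE (gapDist β D₂ f₂ k)) =
      (((sizeWrt β (f₂.G k))⁻¹ - (gapDist β D₂ f₂ k)⁻¹ : ℝ) : EReal) := by
    intro k hk
    rw [invE, invE, if_neg (ne_of_gt (hsz2 k hk).1), if_neg (ne_of_gt (hgdpos2 k hk)),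
      ← EReal.coe_sub]
  have hTle1 : ∀ k ∈ f₁.J, thicknessA β D₁ f₁ ≤
      (((sizeWrt β (f₁.G k))⁻¹ - (gapDist β D₁ f₁ k)⁻¹ : ℝ) : EReal) := by
    intro k hk
    rw [hT1, ← hterm1 k hk]
    exact iInf₂_le k hk
  have hTle2 : ∀ k ∈ f₂.J, thicknessA β D₂ f₂ ≤
      (((sizeWrt β (f₂.G k))⁻¹ - (gapDist β D₂ f₂ k)⁻¹ : ℝ) : EReal) := by
    intro k hk
    rw [hT2, ← hterm2 k hk]
    exact iInf₂_le k hk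
  have hT1netop : thicknessA β D₁ f₁ ≠ ⊤ :=
    ne_top_of_le_ne_top (EReal.coe_ne_top _) (hTle1 k₀' hk₀')
  have hT2netop : thicknessA β D₂ f₂ ≠ ⊤ :=
    ne_top_of_le_ne_top (EReal.coe_ne_top _) (hTle2 l₀'' hl₀'')
  have hT1nebot : thicknessA β D₁ f₁ ≠ ⊥ := by
    intro h; rw [h, EReal.bot_add] at hτ'; simp at hτ'
  have hT2nebot : thicknessA β D₂ f₂ ≠ ⊥ := by
    intro h; rw [h, EReal.add_bot] at hτ'; simp at hτ'
  obtain ⟨t₁, ht₁⟩ : ∃ r : ℝ, thicknessA β D₁ f₁ = (r : EReal) :=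
    ⟨(thicknessA β D₁ f₁).toReal, (EReal.coe_toReal hT1netop hT1nebot).symm⟩
  obtain ⟨t₂, ht₂⟩ : ∃ r : ℝ, thicknessA β D₂ f₂ = (r : EReal) :=
    ⟨(thicknessA β D₂ f₂).toReal, (EReal.coe_toReal hT2netop hT2nebot).symm⟩
  have hb1 : ∀ k ∈ f₁.J, t₁ ≤ (sizeWrt β (f₁.G k))⁻¹ - (gapDist β D₁ f₁ k)⁻¹ := by
    intro k hk
    have h := hTle1 k hk
    rw [ht₁] at h
    exact_mod_cast h
  have hb2 : ∀ k ∈ f₂.J, t₂ ≤ (sizeWrt β (f₂.G k))⁻¹ - (gapDist β D₂ f₂ k)⁻¹ := by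
    intro k hk
    have h := hTle2 k hk
    rw [ht₂] at h
    exact_mod_cast h
  have hτc : 0 < t₁ + t₂ := by
    rw [ht₁, ht₂, ← EReal.coe_add] at hτ'
    exact_mod_cast hτ'
  -- base pair
  obtain ⟨x0, hx0f, hx0E⟩ := Set.not_subset.1 hGaE
  have hx0D1 : x0 ∈ D₁ := AGL.frontier_gap_subset hcomp₁.isClosed hGa.1 hx0f
  have hx0D2 : x0 ∈ D₂ᶜ := fun h => (Set.eq_empty_iff_forall_notMem.1 hdis x0) ⟨hx0D1, h⟩
  have hx0b : Bornology.IsBounded (connectedComponentIn D₂ᶜ x0) := by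
    by_contra h; exact hx0E ⟨hx0D2, h⟩
  obtain ⟨l₀, hl₀, hl₀e⟩ := f₂.surj _ ⟨⟨x0, hx0D2, rfl⟩, hx0b⟩
  have hx0l : x0 ∈ f₂.G l₀ := by rw [hl₀e]; exact mem_connectedComponentIn hx0D2
  have hopenl0 : IsOpen (f₂.G l₀) := by
    rw [hl₀e]; exact hcomp₂.isClosed.isOpen_compl.connectedComponentIn
  have hint0 : (f₁.G k₀' ∩ f₂.G l₀).Nonempty := by
    rw [hGa']
    obtain ⟨q, hq1, hq2⟩ :=
      _root_.mem_closure_iff.1 (frontier_subset_closure hx0f) _ hopenl0 hx0l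
    exact ⟨q, hq2, hq1⟩
  set c := t₁ + t₂ with hc
  set a₀ := min ((sizeWrt β (f₂.G l₀))⁻¹) ((sizeWrt β (f₁.G k₀'))⁻¹ + t₂) with ha₀
  have key : ∀ m : ℕ, ∃ k ∈ f₁.J, ∃ l ∈ f₂.J, (f₁.G k ∩ f₂.G l).Nonempty ∧
      a₀ + m * c ≤ (sizeWrt β (f₂.G l))⁻¹ ∧ (a₀ - t₂) + m * c ≤ (sizeWrt β (f₁.G k))⁻¹ := by
    intro m
    induction m with
    | zero =>
      refine ⟨k₀', hk₀', l₀, hl₀, hint0, ?_, ?_⟩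
      · simp only [Nat.cast_zero, zero_mul, add_zero]
        exact min_le_left _ _
      · simp only [Nat.cast_zero, zero_mul, add_zero]
        have := min_le_right ((sizeWrt β (f₂.G l₀))⁻¹) ((sizeWrt β (f₁.G k₀'))⁻¹ + t₂)
        linarith
    | succ m ih =>
      obtain ⟨k, hk, l, hl, hint, hA, hB⟩ := ih
      obtain ⟨k', hk', hint', hGD1⟩ := AGL.stepR hn hβ hcomp₂ hcomp₁
        (by rw [Set.inter_comm]; exact hdis) (AGL.BGLinked_symm hBG) hDb₁ f₂ f₁ hl hk
        (by rwa [Set.inter_comm] at hint) (hsz2 l hl).2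
      have hchain1 : (sizeWrt β (f₂.G l))⁻¹ ≤ (sizeWrt β (f₁.G k'))⁻¹ - t₁ := by
        have h1 : (sizeWrt β (f₂.G l))⁻¹ ≤ (gapDist β D₁ f₁ k')⁻¹ :=
          inv_anti₀ (hgdpos1 k' hk') hGD1
        have h2 := hb1 k' hk'
        linarith
      obtain ⟨l', hl', hint'', hGD2⟩ := AGL.stepR hn hβ hcomp₁ hcomp₂ hdis hBG hDb₂ f₁ f₂
        hk' hl (by rwa [Set.inter_comm] at hint') (hsz1 k' hk').2
      have hchain2 : (sizeWrt β (f₁.G k'))⁻¹ ≤ (sizeWrt β (f₂.G l'))⁻¹ - t₂ := by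
        have h1 : (sizeWrt β (f₁.G k'))⁻¹ ≤ (gapDist β D₂ f₂ l')⁻¹ :=
          inv_anti₀ (hgdpos2 l' hl') hGD2
        have h2 := hb2 l' hl'
        linarith
      refine ⟨k', hk', l', hl', hint'', ?_, ?_⟩
      · push_cast
        have : a₀ + (m:ℝ) * c + c ≤ (sizeWrt β (f₂.G l'))⁻¹ := by
          rw [hc]; linarith
        linarith [this]
      · push_cast
        have : (a₀ - t₂) + (m:ℝ) * c + c ≤ (sizeWrt β (f₁.G k'))⁻¹ := by
          rw [hc]; linarith
        linarith [this]
  -- separation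
  have hD1ne : D₁.Nonempty := ⟨x0, hx0D1⟩
  have hD2ne : D₂.Nonempty := by
    have hbl : Bornology.IsBounded (f₂.G l₀) := (f₂.isGap l₀ hl₀).2
    obtain ⟨w, hw⟩ := AGL.frontier_nonempty_of_bounded hn hopenl0 hbl ⟨x0, hx0l⟩
    exact ⟨w, AGL.frontier_gap_subset hcomp₂.isClosed (f₂.isGap l₀ hl₀).1 hw⟩
  obtain ⟨d, hd, hsep⟩ := AGL.separation hcomp₁ hcomp₂ hD1ne hD2ne hdis
  obtain ⟨σ, hσ, hbox⟩ := AGL.box_small hn hβ (show (0:ℝ) < d/3 by linarith)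
  obtain ⟨m, hm⟩ := exists_nat_gt (max ((1/σ - a₀)/c) ((1/σ - (a₀ - t₂))/c))
  have hm1 : 1/σ < a₀ + m * c := by
    have h1 : (1/σ - a₀)/c < m := lt_of_le_of_lt (le_max_left _ _) hm
    have h2 := (div_lt_iff₀ hτc).1 h1
    linarith
  have hm2 : 1/σ < (a₀ - t₂) + m * c := by
    have h1 : (1/σ - (a₀ - t₂))/c < m := lt_of_le_of_lt (le_max_right _ _) hm
    have h2 := (div_lt_iff₀ hτc).1 h1
    linarith
  obtain ⟨k, hk, l, hl, hint, hA, hB⟩ := key m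
  have hS2pos := (hsz2 l hl).1
  have hS1pos := (hsz1 k hk).1
  have hS2lt : sizeWrt β (f₂.G l) < σ := by
    have h1 : 1/σ < (sizeWrt β (f₂.G l))⁻¹ := lt_of_lt_of_le hm1 hA
    rw [one_div] at h1
    have e1 : sizeWrt β (f₂.G l) * (sizeWrt β (f₂.G l))⁻¹ = 1 := mul_inv_cancel₀ (ne_of_gt hS2pos)
    have e2 : σ * σ⁻¹ = 1 := mul_inv_cancel₀ (ne_of_gt hσ)
    nlinarith [mul_pos hS2pos hσ]
  have hS1lt : sizeWrt β (f₁.G k) < σ := by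
    have h1 : 1/σ < (sizeWrt β (f₁.G k))⁻¹ := lt_of_lt_of_le hm2 hB
    rw [one_div] at h1
    have e1 : sizeWrt β (f₁.G k) * (sizeWrt β (f₁.G k))⁻¹ = 1 := mul_inv_cancel₀ (ne_of_gt hS1pos)
    have e2 : σ * σ⁻¹ = 1 := mul_inv_cancel₀ (ne_of_gt hσ)
    nlinarith [mul_pos hS1pos hσ]
  have heq1 : sizeWrt β (f₁.G k) = sInf {t | 0 < t ∧ ∃ z, f₁.G k ⊆ affBox β (1/t) z} := rfl
  have heq2 : sizeWrt β (f₂.G l) = sInf {t | 0 < t ∧ ∃ z, f₂.G l ⊆ affBox β (1/t) z} := rfl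
  obtain ⟨t, ⟨ht, z, hz⟩, htσ⟩ := exists_lt_of_csInf_lt (hsz1 k hk).2 (heq1 ▸ hS1lt)
  obtain ⟨s, ⟨hs, z2, hz2⟩, hsσ⟩ := exists_lt_of_csInf_lt (hsz2 l hl).2 (heq2 ▸ hS2lt)
  obtain ⟨p, hpk, hpl⟩ := hint
  have hopenk : IsOpen (f₁.G k) := by
    obtain ⟨xx, hxx, hxe⟩ := (f₁.isGap k hk).1
    rw [hxe]; exact hcomp₁.isClosed.isOpen_compl.connectedComponentIn
  have hopenl : IsOpen (f₂.G l) := by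
    obtain ⟨xx, hxx, hxe⟩ := (f₂.isGap l hl).1
    rw [hxe]; exact hcomp₂.isClosed.isOpen_compl.connectedComponentIn
  obtain ⟨afr, hafr⟩ := AGL.frontier_nonempty_of_bounded hn hopenk (f₁.isGap k hk).2 ⟨p, hpk⟩
  obtain ⟨bfr, hbfr⟩ := AGL.frontier_nonempty_of_bounded hn hopenl (f₂.isGap l hl).2 ⟨p, hpl⟩
  have haD1 : afr ∈ D₁ := AGL.frontier_gap_subset hcomp₁.isClosed (f₁.isGap k hk).1 hafr
  have hbD2 : bfr ∈ D₂ := AGL.frontier_gap_subset hcomp₂.isClosed (f₂.isGap l hl).1 hbfr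
  have hacl : afr ∈ affBox β (1/t) z :=
    closure_minimal hz (AGL.isClosed_affBox β _ z) (frontier_subset_closure hafr)
  have hbcl : bfr ∈ affBox β (1/s) z2 :=
    closure_minimal hz2 (AGL.isClosed_affBox β _ z2) (frontier_subset_closure hbfr)
  have hdpa : dist p afr ≤ d/3 := hbox t ht htσ.le z p afr (hz hpk) hacl
  have hdpb : dist p bfr ≤ d/3 := hbox s hs hsσ.le z2 p bfr (hz2 hpl) hbcl
  have hsep' : d ≤ dist afr bfr := hsep afr haD1 bfr hbD2
  have htri : dist afr bfr ≤ dist afr p + dist p bfr := dist_triangle _ _ _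
  rw [dist_comm afr p] at htri
  linarith
end

section
/- Let A be a diagonal n×n matrix with diagonal entries β₁₁,…,βₙₙ ∈ (0,1) and let C₁, C₂ ⊆ B[0,1] be nonempty compact sets. Then there exist compact sets C₁′, C₂′ ⊆ B[0,1] such that: (i) C₁ ∩ C₂ = C₁′ ∩ C₂′; (ii) τ_A(C₁′) + τ_A(C₂′) ≥ τ_A(C₁) + τ_A(C₂); and (iii) no bounded gap G¹ of C₁′ satisfies closure(G¹) ⊆ G² for any bounded gap G² of C₂′, and no bounded gap G² of C₂′ satisfies closure(G²) ⊆ G¹ for any bounded gap G¹ of C₁′. -/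
/-!
Take `C₁'` to be `C₁` with every bounded gap whose closure misses `C₂` filled in, and `C₂'`
symmetrically. The bounded gaps of `C₁'` are then exactly the bounded gaps of `C₁` whose closure
meets `C₂`, and its unbounded gap is that of `C₁`; so no closure of a gap of `C₁'` fits inside a
gap of `C₂'`. The surviving gaps keep their order, and the gap distance of each can only grow,
since it competes with fewer earlier gaps; hence thickness does not decrease. Filling creates no
new common points: a filled gap of `C₁` misses `C₂`, so a common point of the fillings outside
`C₁ ∩ C₂` lies in gaps `G₁` of `C₁` and `G₂` of `C₂` with `closure G₁ ⊆ G₂ ⊆ G₁`, making the gap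
`G₁` clopen.
-/

open Metric Set Topology Filter
open scoped ENNReal Classical

section Gaps

variable {n : ℕ} {C K G : Set (Fin n → ℝ)} {x y : Fin n → ℝ}

theorem IsGap.subset_compl (h : IsGap C G) : G ⊆ Cᶜ := by
  obtain ⟨x, -, rfl⟩ := h
  exact connectedComponentIn_subset _ _

theorem IsGap.nonempty (h : IsGap C G) : G.Nonempty := by
  obtain ⟨x, hx, rfl⟩ := h
  exact ⟨x, mem_connectedComponentIn hx⟩

theorem IsGap.isOpen (hC : IsClosed C) (h : IsGap C G) : IsOpen G := by
  obtain ⟨x, -, rfl⟩ := h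
  exact hC.isOpen_compl.connectedComponentIn

theorem not_isClosed_connectedComponentIn_compl (hC : IsClosed C) (hne : C.Nonempty)
    (hx : x ∉ C) : ¬ IsClosed (connectedComponentIn Cᶜ x) := fun hclosed => by
  obtain ⟨c, hc⟩ := hne
  have huniv := IsClopen.eq_univ ⟨hclosed, hC.isOpen_compl.connectedComponentIn⟩
    ⟨x, mem_connectedComponentIn hx⟩
  exact connectedComponentIn_subset _ _ (huniv ▸ mem_univ c : c ∈ connectedComponentIn Cᶜ x) hc

theorem mem_unboundedGap_of_notMem_closedBall {r : ℝ} (hr : 0 ≤ r) (hC : C ⊆ closedBall 0 r)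
    (hx : x ∉ closedBall 0 r) : x ∈ unboundedGap C := by
  rw [mem_closedBall_zero_iff, not_le] at hx
  have hray : ∀ a ∈ Ici (1 : ℝ), r < ‖a • x‖ := fun a ha => by
    rw [norm_smul, Real.norm_of_nonneg (zero_le_one.trans ha)]
    nlinarith [mem_Ici.mp ha]
  have hxC : x ∉ C := fun h => (mem_closedBall_zero_iff.mp (hC h)).not_gt hx
  refine ⟨hxC, fun hb => ?_⟩
  have hsub : (fun a : ℝ => a • x) '' Ici 1 ⊆ connectedComponentIn Cᶜ x :=
    (isPreconnected_Ici.image _ (by fun_prop)).subset_connectedComponentIn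
      ⟨1, self_mem_Ici, one_smul _ _⟩ <| by
        rintro _ ⟨a, ha, rfl⟩ h
        exact (mem_closedBall_zero_iff.mp (hC h)).not_gt (hray a ha)
  obtain ⟨M, hM⟩ := hb.exists_norm_le
  have hxM : ‖x‖ ≤ M := hM x (mem_connectedComponentIn hxC)
  have hxpos : 0 < ‖x‖ := hr.trans_lt hx
  have hM0 : 0 ≤ M / ‖x‖ := div_nonneg (hxpos.le.trans hxM) hxpos.le
  have hlarge := hM _ (hsub ⟨M / ‖x‖ + 1, by simpa using hM0, rfl⟩)
  rw [norm_smul, Real.norm_of_nonneg (by positivity), add_mul, div_mul_cancel₀ _ hxpos.ne']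
    at hlarge
  linarith

end Gaps

section FillGaps

variable {n : ℕ} {C K G H : Set (Fin n → ℝ)} {x y : Fin n → ℝ}

def fillGaps (C K : Set (Fin n → ℝ)) : Set (Fin n → ℝ) :=
  C ∪ {x | Bornology.IsBounded (connectedComponentIn Cᶜ x) ∧
    Disjoint (closure (connectedComponentIn Cᶜ x)) K}

theorem subset_fillGaps : C ⊆ fillGaps C K := subset_union_left

theorem notMem_of_mem_fillGaps (hxF : x ∈ fillGaps C K) (hx : x ∉ C) : x ∉ K :=
  disjoint_left.1 (hxF.resolve_left hx).2 (subset_closure (mem_connectedComponentIn hx))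

theorem IsBoundedGap.subset_fillGaps (hG : IsBoundedGap C G) (hK : Disjoint (closure G) K) :
    G ⊆ fillGaps C K := by
  obtain ⟨⟨x, -, rfl⟩, hb⟩ := hG
  intro w hw
  right
  rw [mem_ofPred_eq, ← connectedComponentIn_eq hw]
  exact ⟨hb, hK⟩

theorem connectedComponentIn_subset_compl_fillGaps (hy : y ∉ fillGaps C K) :
    connectedComponentIn Cᶜ y ⊆ (fillGaps C K)ᶜ := by
  intro w hw hwF
  have hy' : ¬ (Bornology.IsBounded (connectedComponentIn Cᶜ y) ∧
      Disjoint (closure (connectedComponentIn Cᶜ y)) K) := fun h => hy (Or.inr h)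
  rw [connectedComponentIn_eq hw] at hy'
  exact hwF.elim (connectedComponentIn_subset _ _ hw) hy'

theorem connectedComponentIn_compl_fillGaps (hy : y ∉ fillGaps C K) :
    connectedComponentIn (fillGaps C K)ᶜ y = connectedComponentIn Cᶜ y :=
  subset_antisymm (connectedComponentIn_mono _ (compl_subset_compl.2 subset_fillGaps))
    (isPreconnected_connectedComponentIn.subset_connectedComponentIn
      (mem_connectedComponentIn fun h => hy (subset_fillGaps h))
      (connectedComponentIn_subset_compl_fillGaps hy))

theorem isClosed_fillGaps (hC : IsClosed C) : IsClosed (fillGaps C K) :=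
  isOpen_compl_iff.1 <| isOpen_iff_forall_mem_open.2 fun _ hy =>
    ⟨_, connectedComponentIn_subset_compl_fillGaps hy, hC.isOpen_compl.connectedComponentIn,
      mem_connectedComponentIn fun h => hy (subset_fillGaps h)⟩

theorem fillGaps_subset_closedBall {r : ℝ} (hr : 0 ≤ r) (hC : C ⊆ closedBall 0 r) :
    fillGaps C K ⊆ closedBall 0 r := by
  rintro x (hx | ⟨hb, -⟩)
  · exact hC hx
  · by_contra hxr
    exact (mem_unboundedGap_of_notMem_closedBall hr hC hxr).2 hb

theorem isCompact_fillGaps {r : ℝ} (hr : 0 ≤ r) (hC : IsCompact C) (hCr : C ⊆ closedBall 0 r) :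
    IsCompact (fillGaps C K) :=
  (isCompact_closedBall 0 r).of_isClosed_subset (isClosed_fillGaps hC.isClosed)
    (fillGaps_subset_closedBall hr hCr)

theorem isBoundedGap_fillGaps_iff :
    IsBoundedGap (fillGaps C K) H ↔ IsBoundedGap C H ∧ ¬ Disjoint (closure H) K := by
  constructor
  · rintro ⟨⟨y, hy, rfl⟩, hb⟩
    rw [connectedComponentIn_compl_fillGaps hy] at hb ⊢
    exact ⟨⟨⟨y, fun h => hy (subset_fillGaps h), rfl⟩, hb⟩, fun hd => hy (Or.inr ⟨hb, hd⟩)⟩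
  · rintro ⟨⟨⟨x, hx, rfl⟩, hb⟩, hK⟩
    have hxF : x ∉ fillGaps C K := fun h => hK (h.resolve_left hx).2
    exact ⟨⟨x, hxF, (connectedComponentIn_compl_fillGaps hxF).symm⟩, hb⟩

theorem unboundedGap_fillGaps : unboundedGap (fillGaps C K) = unboundedGap C := by
  ext y
  constructor
  · rintro ⟨hy, hb⟩
    exact ⟨fun h => hy (subset_fillGaps h), by rwa [← connectedComponentIn_compl_fillGaps hy]⟩
  · rintro ⟨hy, hb⟩
    have hyF : y ∉ fillGaps C K := fun h => hb (h.resolve_left hy).1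
    exact ⟨hyF, by rwa [connectedComponentIn_compl_fillGaps hyF]⟩

theorem fillGaps_inter_fillGaps {C₁ C₂ : Set (Fin n → ℝ)} (hC₁ : IsClosed C₁)
    (hne₁ : C₁.Nonempty) : fillGaps C₁ C₂ ∩ fillGaps C₂ C₁ = C₁ ∩ C₂ := by
  refine subset_antisymm ?_ (inter_subset_inter subset_fillGaps subset_fillGaps)
  rintro x ⟨hx₁, hx₂⟩
  by_contra hx
  have hxC₁ : x ∉ C₁ := fun h => notMem_of_mem_fillGaps hx₂ (fun h₂ => hx ⟨h, h₂⟩) h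
  have hxC₂ : x ∉ C₂ := notMem_of_mem_fillGaps hx₁ hxC₁
  have hd₁ := (hx₁.resolve_left hxC₁).2
  have hd₂ := (hx₂.resolve_left hxC₂).2
  have h₁₂ : closure (connectedComponentIn C₁ᶜ x) ⊆ connectedComponentIn C₂ᶜ x :=
    isPreconnected_connectedComponentIn.closure.subset_connectedComponentIn
      (subset_closure (mem_connectedComponentIn hxC₁)) hd₁.subset_compl_right
  have h₂₁ : connectedComponentIn C₂ᶜ x ⊆ connectedComponentIn C₁ᶜ x :=
    isPreconnected_connectedComponentIn.subset_connectedComponentIn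
      (mem_connectedComponentIn hxC₂) (subset_closure.trans hd₂.subset_compl_right)
  exact not_isClosed_connectedComponentIn_compl hC₁ hne₁ hxC₁
    (closure_subset_iff_isClosed.1 (h₁₂.trans h₂₁))

theorem not_closure_subset_of_isBoundedGap_fillGaps {G' : Set (Fin n → ℝ)}
    (hG : IsBoundedGap (fillGaps C K) G) (hG' : IsGap K G') : ¬ closure G ⊆ G' := fun h => by
  obtain ⟨y, hyG, hyK⟩ := not_disjoint_iff.1 (isBoundedGap_fillGaps_iff.1 hG).2
  exact hG'.subset_compl (h hyG) hyK

end FillGaps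

section AffineBoxes

variable {n : ℕ} {β : Fin n → ℝ} {C G : Set (Fin n → ℝ)}

theorem closedBall_subset_affBox {s r : ℝ} {z : Fin n → ℝ} (h : ∀ j, r ≤ β j ^ s) :
    closedBall z r ⊆ affBox β s z := fun x hx j =>
  (Real.dist_eq (x j) (z j) ▸ dist_le_pi_dist x z j).trans ((mem_closedBall.1 hx).trans (h j))

theorem eventually_forall_le_rpow (hβ : ∀ j, 0 < β j) {c : ℝ} (hc : c < 1) :
    ∀ᶠ s : ℝ in 𝓝 0, ∀ j, c ≤ β j ^ s :=
  eventually_all.2 fun j => by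
    have : Tendsto (fun s : ℝ => β j ^ s) (𝓝 0) (𝓝 1) := by
      simpa using (Real.continuousAt_const_rpow (b := 0) (hβ j).ne').tendsto
    exact this.eventually (eventually_ge_nhds hc)

theorem exists_dist_eq_le_norm {E : Type*} [NormedAddCommGroup E] [NormedSpace ℝ E]
    [Nontrivial E] (g : E) {r : ℝ} (hr : 0 ≤ r) : ∃ u, dist g u = r ∧ r ≤ ‖u‖ := by
  obtain ⟨e, he⟩ := exists_norm_eq E hr
  by_cases h : r ≤ ‖g + e‖
  · exact ⟨g + e, by rw [dist_eq_norm, sub_add_cancel_left, norm_neg, he], h⟩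
  · refine ⟨g - e, by rw [dist_eq_norm, sub_sub_cancel, he], ?_⟩
    have := norm_sub_le (g + e) (g - e)
    rw [show g + e - (g - e) = (2 : ℝ) • e by module, norm_smul, he] at this
    norm_num at this
    linarith

theorem IsBoundedGap.exists_affBox_inter_nonempty (hβ : ∀ j, 0 < β j) (hne : C.Nonempty)
    (hC : C ⊆ closedBall 0 1) (hG : IsBoundedGap C G) :
    ∃ t, 0 < t ∧ ∃ z, (affBox β (1 / t) z ∩ G).Nonempty ∧
      (affBox β (1 / t) z ∩ unboundedGap C).Nonempty := by
  -- Boxes with a small positive exponent have half-widths close to `1`, so one of them joins a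
  -- point of `G` to a point of norm `3 / 2`, which lies in the unbounded gap.
  obtain ⟨g, hg⟩ := hG.1.nonempty
  obtain ⟨c, hc⟩ := hne
  have : Nontrivial (Fin n → ℝ) := ⟨⟨g, c, fun h => hG.1.subset_compl hg (h ▸ hc)⟩⟩
  obtain ⟨u, hgu, hu⟩ := exists_dist_eq_le_norm g (show (0 : ℝ) ≤ 3 / 2 by norm_num)
  have huE : u ∈ unboundedGap C := mem_unboundedGap_of_notMem_closedBall zero_le_one hC <| by
    rw [mem_closedBall_zero_iff]
    linarith
  have hsmall := eventually_forall_le_rpow hβ (show (3 / 4 : ℝ) < 1 by norm_num)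
  obtain ⟨s, hs, hs0⟩ :=
    (hsmall.filter_mono nhdsWithin_le_nhds |>.and (self_mem_nhdsWithin (s := Ioi 0))).exists
  have hbox := closedBall_subset_affBox (z := midpoint ℝ g u) hs
  refine ⟨1 / s, one_div_pos.2 hs0, midpoint ℝ g u, ⟨g, ?_, hg⟩, ⟨u, ?_, huE⟩⟩ <;>
    rw [one_div_one_div] <;> apply hbox <;> rw [mem_closedBall]
  · rw [dist_left_midpoint, hgu]; norm_num
  · rw [dist_right_midpoint, hgu]; norm_num

end AffineBoxes

namespace GapEnum

variable {n : ℕ} {β : Fin n → ℝ} {C C' : Set (Fin n → ℝ)}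

/-- The subsequence of `e` formed by the gaps satisfying `p`, re-indexed by `Nat.nth`; its index
set is `Iio N` when exactly `N` gaps satisfy `p`, and all of `ℕ` otherwise. -/
def restrict (e : GapEnum β C) {p : Set (Fin n → ℝ) → Prop}
    (h : ∀ H, IsBoundedGap C' H ↔ IsBoundedGap C H ∧ p H) : GapEnum β C' where
  J := {m | ∀ hf : (Set.ofPred fun k => k ∈ e.J ∧ p (e.G k)).Finite, m < hf.toFinset.card}
  G m := e.G (Nat.nth (fun k => k ∈ e.J ∧ p (e.G k)) m)
  downward _ _ hkl hl hf := hkl.trans_lt (hl hf)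
  isGap m hm := (h _).2 ⟨e.isGap _ (Nat.nth_mem m hm).1, (Nat.nth_mem m hm).2⟩
  inj k hk l hl hkl := by
    have := e.inj _ (Nat.nth_mem k hk).1 _ (Nat.nth_mem l hl).1 hkl
    rcases lt_trichotomy k l with hlt | heq | hgt
    · exact absurd this (Nat.nth_lt_nth' hlt hl).ne
    · exact heq
    · exact absurd this (Nat.nth_lt_nth' hgt hk).ne'
  surj H hH := by
    obtain ⟨hHC, hp⟩ := (h H).1 hH
    obtain ⟨k, hk, rfl⟩ := e.surj H hHC
    exact ⟨_, fun hf => Nat.count_lt_card hf ⟨hk, hp⟩, by rw [Nat.nth_count ⟨hk, hp⟩]⟩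
  anti k hk l hl hkl :=
    e.anti _ (Nat.nth_mem k hk).1 _ (Nat.nth_mem l hl).1 (Nat.nth_le_nth' hkl hl)

theorem exists_restrict_G_eq (e : GapEnum β C) {p : Set (Fin n → ℝ) → Prop}
    (h : ∀ H, IsBoundedGap C' H ↔ IsBoundedGap C H ∧ p H) {m : ℕ} (hm : m ∈ (e.restrict h).J) :
    ∃ k ∈ e.J, (e.restrict h).G m = e.G k ∧
      ⋃ i ∈ (e.restrict h).J ∩ Iio m, (e.restrict h).G i ⊆ ⋃ i ∈ e.J ∩ Iio k, e.G i := by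
  refine ⟨_, (Nat.nth_mem m hm).1, rfl, iUnion₂_subset fun i hi => ?_⟩
  exact subset_biUnion_of_mem (u := e.G)
    ⟨(Nat.nth_mem i hi.1).1, Nat.nth_lt_nth' (mem_Iio.1 hi.2) hm⟩

end GapEnum

section Thickness

variable {n : ℕ} {β : Fin n → ℝ} {C C' : Set (Fin n → ℝ)}

theorem invE_le_invE {a b : ℝ} (ha : 0 < a) (h : a ≤ b) : invE b ≤ invE a := by
  rw [invE, invE, if_neg ha.ne', if_neg (ha.trans_le h).ne']
  exact EReal.coe_le_coe_iff.2 (inv_anti₀ ha h)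

theorem gapDist_nonneg (e : GapEnum β C) (m : ℕ) : 0 ≤ gapDist β C e m :=
  Real.sInf_nonneg fun _ ht => ht.1.le

theorem gapDist_le_gapDist {e : GapEnum β C} {e' : GapEnum β C'} {k m : ℕ}
    (hG : e'.G m = e.G k)
    (hprev : (⋃ i ∈ e'.J ∩ Iio m, e'.G i) ∪ unboundedGap C' ⊆
      (⋃ i ∈ e.J ∩ Iio k, e.G i) ∪ unboundedGap C)
    -- nonemptiness of the set defining `gapDist β C' e' m`, whose `sInf` would otherwise be `0`
    (hne : ∃ t, 0 < t ∧ ∃ z, (affBox β (1 / t) z ∩ e'.G m).Nonempty ∧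
      (affBox β (1 / t) z ∩ unboundedGap C').Nonempty) :
    gapDist β C e k ≤ gapDist β C' e' m := by
  refine csInf_le_csInf ⟨0, fun t ht => ht.1.le⟩ ?_ ?_
  · obtain ⟨t, ht, z, hG', hE⟩ := hne
    exact ⟨t, ht, z, hG', hE.mono (inter_subset_inter_right _ subset_union_right)⟩
  · rintro t ⟨ht, z, hG', hE⟩
    exact ⟨ht, z, hG ▸ hG', hE.mono (inter_subset_inter_right _ hprev)⟩

theorem thicknessA_le_thicknessA {e : GapEnum β C} {e' : GapEnum β C'} (hCC' : C ⊆ C')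
    (hint : e'.J = ∅ → e.J.Nonempty → (interior C').Nonempty)
    (hgaps : ∀ m ∈ e'.J, ∃ k ∈ e.J, e'.G m = e.G k ∧ gapDist β C e k ≤ gapDist β C' e' m) :
    thicknessA β C e ≤ thicknessA β C' e' := by
  by_cases hJ : e.J = ∅
  · have hJ' : e'.J = ∅ := eq_empty_of_forall_notMem fun m hm => by
      obtain ⟨k, hk, -⟩ := hgaps m hm
      exact (hJ ▸ hk : k ∈ (∅ : Set ℕ))
    by_cases hC : (interior C).Nonempty
    · simp [thicknessA, hJ, hJ', hC, hC.mono (interior_mono hCC')]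
    · simp [thicknessA, hJ, hC]
  by_cases hzero : ∃ k ∈ e.J, gapDist β C e k = 0
  · simp [thicknessA, hJ, hzero]
  by_cases hJ' : e'.J = ∅
  · simp [thicknessA, hJ', hint hJ' (nonempty_iff_ne_empty.2 hJ)]
  have hpos : ∀ k ∈ e.J, 0 < gapDist β C e k := fun k hk =>
    (gapDist_nonneg e k).lt_of_ne fun h => hzero ⟨k, hk, h.symm⟩
  have hzero' : ¬ ∃ m ∈ e'.J, gapDist β C' e' m = 0 := by
    rintro ⟨m, hm, h0⟩
    obtain ⟨k, hk, -, hle⟩ := hgaps m hm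
    exact (hpos k hk).not_ge (h0 ▸ hle)
  rw [thicknessA, thicknessA, if_neg hJ, if_neg hzero, if_neg hJ', if_neg hzero']
  refine le_iInf₂ fun m hm => ?_
  obtain ⟨k, hk, hG, hle⟩ := hgaps m hm
  rw [hG]
  exact (iInf₂_le k hk).trans (EReal.sub_le_sub le_rfl (invE_le_invE (hpos k hk) hle))

theorem exists_gapEnum_fillGaps_thicknessA_le {K : Set (Fin n → ℝ)} (hβ : ∀ j, 0 < β j)
    (hC : IsClosed C) (hne : C.Nonempty) (hCball : C ⊆ closedBall 0 1) (e : GapEnum β C) :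
    ∃ e' : GapEnum β (fillGaps C K), thicknessA β C e ≤ thicknessA β (fillGaps C K) e' := by
  let e' : GapEnum β (fillGaps C K) := e.restrict fun _ => isBoundedGap_fillGaps_iff
  refine ⟨e', thicknessA_le_thicknessA subset_fillGaps ?_ fun m hm => ?_⟩
  · rintro hJ' ⟨k, hk⟩
    have hGk := e.isGap k hk
    have hdisj : Disjoint (closure (e.G k)) K := by
      by_contra hK
      obtain ⟨m, hm, -⟩ := e'.surj _ (isBoundedGap_fillGaps_iff.2 ⟨hGk, hK⟩)
      exact (hJ' ▸ hm : m ∈ (∅ : Set ℕ))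
    obtain ⟨g, hg⟩ := hGk.1.nonempty
    exact ⟨g, interior_maximal (hGk.subset_fillGaps hdisj) (hGk.1.isOpen hC) hg⟩
  · obtain ⟨k, hk, hG, hprev⟩ := e.exists_restrict_G_eq _ hm
    refine ⟨k, hk, hG, gapDist_le_gapDist hG
      (union_subset_union hprev unboundedGap_fillGaps.subset) ?_⟩
    rw [hG, unboundedGap_fillGaps]
    exact (e.isGap k hk).exists_affBox_inter_nonempty hβ hne hCball

end Thickness

/-- removing gaps contained in gaps of the other set. -/
theorem remove_contained_gaps (n : ℕ)
    (β : Fin n → ℝ) (hβ : ∀ j, β j ∈ Set.Ioo (0 : ℝ) 1)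
    (C₁ C₂ : Set (Fin n → ℝ)) (hC₁ : IsCompact C₁) (hC₂ : IsCompact C₂)
    (hne₁ : C₁.Nonempty) (hne₂ : C₂.Nonempty)
    (hsub₁ : C₁ ⊆ closedBall 0 1) (hsub₂ : C₂ ⊆ closedBall 0 1)
    (e₁ : GapEnum β C₁) (e₂ : GapEnum β C₂) :
    ∃ C₁' C₂' : Set (Fin n → ℝ), IsCompact C₁' ∧ IsCompact C₂' ∧
      C₁' ⊆ closedBall 0 1 ∧ C₂' ⊆ closedBall 0 1 ∧
      C₁ ∩ C₂ = C₁' ∩ C₂' ∧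
      (∃ e₁' : GapEnum β C₁', ∃ e₂' : GapEnum β C₂',
        thicknessA β C₁ e₁ + thicknessA β C₂ e₂ ≤
          thicknessA β C₁' e₁' + thicknessA β C₂' e₂') ∧
      (∀ G₁ G₂, IsBoundedGap C₁' G₁ → IsBoundedGap C₂' G₂ → ¬ closure G₁ ⊆ G₂) ∧
      (∀ G₁ G₂, IsBoundedGap C₁' G₁ → IsBoundedGap C₂' G₂ → ¬ closure G₂ ⊆ G₁) := by
  have hβ₀ : ∀ j, 0 < β j := fun j => (hβ j).1
  obtain ⟨e₁', he₁⟩ :=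
    exists_gapEnum_fillGaps_thicknessA_le (K := C₂) hβ₀ hC₁.isClosed hne₁ hsub₁ e₁
  obtain ⟨e₂', he₂⟩ :=
    exists_gapEnum_fillGaps_thicknessA_le (K := C₁) hβ₀ hC₂.isClosed hne₂ hsub₂ e₂
  refine ⟨fillGaps C₁ C₂, fillGaps C₂ C₁, isCompact_fillGaps zero_le_one hC₁ hsub₁,
    isCompact_fillGaps zero_le_one hC₂ hsub₂, fillGaps_subset_closedBall zero_le_one hsub₁,
    fillGaps_subset_closedBall zero_le_one hsub₂, (fillGaps_inter_fillGaps hC₁.isClosed hne₁).symm,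
    ⟨e₁', e₂', add_le_add he₁ he₂⟩, fun G₁ G₂ hG₁ hG₂ => ?_, fun G₁ G₂ hG₁ hG₂ => ?_⟩
  · exact not_closure_subset_of_isBoundedGap_fillGaps hG₁
      (isBoundedGap_fillGaps_iff.1 hG₂).1.1
  · exact not_closure_subset_of_isBoundedGap_fillGaps hG₂
      (isBoundedGap_fillGaps_iff.1 hG₁).1.1
end

section
/- Let β ∈ (0,1), let A = βI be the diagonal n×n matrix with all diagonal entries equal to β, and let C ⊆ B[0,1] ⊆ ℝⁿ be a compact set whose Falconer–Yavicoli thickness satisfies 0 < τ(C) < ∞. Then log_β(τ(C)) = −τ_A(C), i.e. τ_A(C) = −log(τ(C))/log(β). -/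
open Metric Set Topology Filter
open scoped ENNReal Classical

section ProofHelpers
open Real Bornology

variable {n : ℕ}

lemma mem_cb_pi {x z : Fin n → ℝ} {r : ℝ} (hr : 0 ≤ r) :
    x ∈ closedBall z r ↔ ∀ j, |x j - z j| ≤ r := by
  rw [Metric.mem_closedBall, dist_pi_le_iff hr]
  simp [Real.dist_eq]

lemma affBox_eq {b : ℝ} (hb : 0 < b) (s : ℝ) (z : Fin n → ℝ) :
    affBox (fun _ : Fin n => b) s z = closedBall z (b ^ s) := by
  ext x
  rw [mem_cb_pi (Real.rpow_pos_of_pos hb s).le]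
  exact Iff.rfl

lemma ray_unbounded {C : Set (Fin n → ℝ)} (hsub : C ⊆ closedBall 0 1)
    (p : Fin n → ℝ) (j : Fin n) (σ : ℝ) (hσ : σ = 1 ∨ σ = -1)
    (hσp : σ * p j = |p j|) (hpj : 1 < |p j|) :
    p ∈ unboundedGap C := by
  have hσ1 : |σ| = 1 := by rcases hσ with h | h <;> simp [h]
  set S : Set (Fin n → ℝ) := {y | (∀ i, i ≠ j → y i = p i) ∧ σ * p j ≤ σ * y j} with hS
  have hpS : p ∈ S := ⟨fun _ _ => rfl, le_refl _⟩
  have hSC : S ⊆ Cᶜ := by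
    intro y hy hyC
    have h1 : dist (y j) ((0 : Fin n → ℝ) j) ≤ dist y 0 := dist_le_pi_dist y 0 j
    have h2 : dist y 0 ≤ 1 := by simpa [Metric.mem_closedBall] using hsub hyC
    have h3 : σ * y j ≤ |y j| := by
      calc σ * y j ≤ |σ * y j| := le_abs_self _
        _ = |y j| := by rw [abs_mul, hσ1, one_mul]
    have h4 : (1:ℝ) < |y j| := lt_of_lt_of_le hpj (le_trans (hσp ▸ hy.2) h3)
    rw [Real.dist_eq, Pi.zero_apply, sub_zero] at h1
    linarith
  have hconv : Convex ℝ S := by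
    rintro y hy z hz a c ha hc hac
    refine ⟨fun i hij => ?_, ?_⟩
    · have h : (a • y + c • z) i = a * y i + c * z i := rfl
      rw [h, hy.1 i hij, hz.1 i hij, ← add_mul, hac, one_mul]
    · have h : (a • y + c • z) j = a * y j + c * z j := rfl
      rw [h]
      have h1 : a * (σ * p j) ≤ a * (σ * y j) := mul_le_mul_of_nonneg_left hy.2 ha
      have h2 : c * (σ * p j) ≤ c * (σ * z j) := mul_le_mul_of_nonneg_left hz.2 hc
      nlinarith [hac]
  have hSunb : ¬ IsBounded S := by
    intro hbd
    rw [Metric.isBounded_iff] at hbd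
    obtain ⟨M, hM⟩ := hbd
    set q : Fin n → ℝ := Function.update p j (p j + σ * (|M| + 1)) with hq
    have hqj : q j = p j + σ * (|M| + 1) := by rw [hq, Function.update_self]
    have hqS : q ∈ S := by
      refine ⟨fun i hij => by rw [hq, Function.update_of_ne hij], ?_⟩
      rw [hqj]
      have h5 : σ * (p j + σ * (|M| + 1)) = σ * p j + (σ * σ) * (|M| + 1) := by ring
      have h6 : σ * σ = 1 := by rcases hσ with h | h <;> rw [h] <;> norm_num
      rw [h5, h6]
      nlinarith [abs_nonneg M]
    have h1 := hM hpS hqS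
    have h2 : dist (p j) (q j) ≤ dist p q := dist_le_pi_dist p q j
    rw [hqj, Real.dist_eq] at h2
    have h3 : |p j - (p j + σ * (|M| + 1))| = |M| + 1 := by
      rw [show p j - (p j + σ * (|M| + 1)) = -(σ * (|M|+1)) by ring, abs_neg, abs_mul, hσ1,
        one_mul, abs_of_nonneg (by positivity)]
    rw [h3] at h2
    have := le_abs_self M
    linarith
  refine ⟨hSC hpS, fun hbd => ?_⟩
  exact hSunb (hbd.subset (hconv.isPreconnected.subset_connectedComponentIn hpS hSC))

lemma IsBoundedGap.nonempty {C G : Set (Fin n → ℝ)} (h : IsBoundedGap C G) : G.Nonempty := by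
  obtain ⟨⟨x, hx, rfl⟩, -⟩ := h
  exact ⟨x, mem_connectedComponentIn hx⟩

lemma IsBoundedGap.subset_compl {C G : Set (Fin n → ℝ)} (h : IsBoundedGap C G) : G ⊆ Cᶜ := by
  obtain ⟨⟨x, hx, rfl⟩, -⟩ := h
  exact connectedComponentIn_subset _ _

lemma IsBoundedGap.eq_comp {C G : Set (Fin n → ℝ)} (h : IsBoundedGap C G) {a : Fin n → ℝ}
    (ha : a ∈ G) : G = connectedComponentIn Cᶜ a := by
  obtain ⟨⟨x, hx, rfl⟩, -⟩ := h
  exact connectedComponentIn_eq ha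

lemma gap_coord {C G : Set (Fin n → ℝ)} (hsub : C ⊆ closedBall 0 1) (h : IsBoundedGap C G)
    {a : Fin n → ℝ} (ha : a ∈ G) (j : Fin n) : |a j| ≤ 1 := by
  by_contra hc
  push_neg at hc
  have hmem : a ∈ unboundedGap C := by
    rcases le_or_gt 0 (a j) with h0 | h0
    · exact ray_unbounded hsub a j 1 (Or.inl rfl) (by rw [one_mul, abs_of_nonneg h0]) hc
    · exact ray_unbounded hsub a j (-1) (Or.inr rfl) (by rw [neg_one_mul, abs_of_neg h0]) hc
  exact hmem.2 (h.eq_comp ha ▸ h.2)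

lemma gap_ball {C G : Set (Fin n → ℝ)} (hC : IsCompact C) (h : IsBoundedGap C G)
    {a : Fin n → ℝ} (ha : a ∈ G) : ∃ r > 0, ball a r ⊆ G := by
  have hopen : IsOpen Cᶜ := hC.isClosed.isOpen_compl
  obtain ⟨r, hr, hball⟩ := Metric.isOpen_iff.mp hopen a (h.subset_compl ha)
  refine ⟨r, hr, ?_⟩
  rw [h.eq_comp ha]
  exact (convex_ball a r).isPreconnected.subset_connectedComponentIn (mem_ball_self hr) hball

lemma gap_diam_pos (hn : 0 < n) {C G : Set (Fin n → ℝ)} (hC : IsCompact C)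
    (h : IsBoundedGap C G) : 0 < Metric.diam G := by
  obtain ⟨a, ha⟩ := h.nonempty
  obtain ⟨r, hr, hball⟩ := gap_ball hC h ha
  set j : Fin n := ⟨0, hn⟩
  set y : Fin n → ℝ := Function.update a j (a j + r/2) with hy
  have hyj : y j = a j + r/2 := by rw [hy, Function.update_self]
  have hyb : y ∈ ball a r := by
    rw [mem_ball]
    have h1 : dist y a ≤ r/2 := by
      rw [dist_pi_le_iff (by linarith)]
      intro i
      rcases eq_or_ne i j with rfl | hij
      · rw [hyj, Real.dist_eq, show a j + r/2 - a j = r/2 by ring, abs_of_nonneg (by linarith)]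
      · rw [hy, Function.update_of_ne hij, Real.dist_eq, sub_self, abs_zero]; linarith
    linarith
  have h1 : dist (a j) (y j) ≤ dist a y := dist_le_pi_dist a y j
  rw [hyj, Real.dist_eq] at h1
  have h2 : dist a y ≤ Metric.diam G := Metric.dist_le_diam_of_mem h.2 ha (hball hyb)
  have h3 : |a j - (a j + r/2)| = r/2 := by
    rw [show a j - (a j + r/2) = -(r/2) by ring, abs_neg, abs_of_nonneg (by linarith)]
  rw [h3] at h1
  linarith

lemma distSet_lb (A B : Set (Fin n → ℝ)) :
    ∀ r ∈ {r | ∃ a ∈ A, ∃ b ∈ B, r = dist a b}, (0:ℝ) ≤ r := by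
  rintro r ⟨a, -, c, -, rfl⟩
  exact dist_nonneg

lemma setDist_nonneg (A B : Set (Fin n → ℝ)) : 0 ≤ setDist A B :=
  Real.sInf_nonneg (distSet_lb A B)

lemma setDist_le {A B : Set (Fin n → ℝ)} {a c : Fin n → ℝ} (ha : a ∈ A) (hc : c ∈ B) :
    setDist A B ≤ dist a c :=
  csInf_le ⟨0, distSet_lb A B⟩ ⟨a, ha, c, hc, rfl⟩

lemma setDist_le_two_sub_diam {C G S : Set (Fin n → ℝ)} (hsub : C ⊆ closedBall 0 1)
    (hG : IsBoundedGap C G) (hS : unboundedGap C ⊆ S) (hD0 : 0 < Metric.diam G) :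
    setDist G S ≤ 2 - Metric.diam G := by
  set D := Metric.diam G with hD
  have key : ∀ ε : ℝ, 0 < ε → ε < D → setDist G S ≤ 2 - D + 3*ε := by
    intro ε hε hεD
    have h1 : ∃ x ∈ G, ∃ y ∈ G, D - ε < dist x y := by
      by_contra hcon
      push_neg at hcon
      have : D ≤ D - ε := Metric.diam_le_of_forall_dist_le (by linarith) hcon
      linarith
    obtain ⟨x, hx, y, hy, hxy⟩ := h1
    have h2 : ∃ j, D - ε < |x j - y j| := by
      by_contra hcon
      push_neg at hcon
      have : dist x y ≤ D - ε := by
        rw [dist_pi_le_iff (by linarith)]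
        intro i
        rw [Real.dist_eq]
        exact hcon i
      linarith
    obtain ⟨j, hj⟩ := h2
    have main : ∀ u, u ∈ G → ∀ v, v ∈ G → D - ε < u j - v j → setDist G S ≤ 2 - D + 3*ε := by
      intro u hu v hv huv
      have hu1 : |u j| ≤ 1 := gap_coord hsub hG hu j
      have hv1 : |v j| ≤ 1 := gap_coord hsub hG hv j
      have huj : u j ≤ 1 := le_trans (le_abs_self _) hu1
      have hvj : -1 ≤ v j := neg_le_of_abs_le hv1
      set p : Fin n → ℝ := Function.update u j (1 + ε) with hp
      have hpj : p j = 1 + ε := by rw [hp, Function.update_self]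
      have hpE : p ∈ unboundedGap C := by
        apply ray_unbounded hsub p j 1 (Or.inl rfl)
        · rw [one_mul, hpj, abs_of_nonneg (by linarith)]
        · rw [hpj, abs_of_nonneg (by linarith)]; linarith
      have hd : dist u p ≤ 1 + ε - u j := by
        rw [dist_pi_le_iff (by linarith)]
        intro i
        rcases eq_or_ne i j with rfl | hij
        · rw [hpj, Real.dist_eq, abs_of_nonpos (by linarith)]; linarith
        · rw [hp, Function.update_of_ne hij, Real.dist_eq, sub_self, abs_zero]; linarith
      have h5 : setDist G S ≤ dist u p := setDist_le hu (hS hpE)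
      linarith
    rcases le_total (y j) (x j) with hle | hle
    · exact main x hx y hy (by rwa [abs_of_nonneg (by linarith)] at hj)
    · exact main y hy x hx (by rw [abs_sub_comm] at hj; rwa [abs_of_nonneg (by linarith)] at hj)
  refine le_of_forall_pos_le_add ?_
  intro ε hε
  have hm : 0 < min (ε/3) (D/2) := lt_min (by linarith) (by linarith)
  have h6 := key _ hm (lt_of_le_of_lt (min_le_right _ _) (by linarith))
  have h7 : 3 * min (ε/3) (D/2) ≤ ε := by
    have := min_le_left (ε/3) (D/2)
    linarith
  linarith

lemma unboundedGap_nonempty (hn : 0 < n) {C : Set (Fin n → ℝ)} (hsub : C ⊆ closedBall 0 1) :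
    (unboundedGap C).Nonempty := by
  refine ⟨fun _ => 2, ray_unbounded hsub (fun _ => 2) ⟨0, hn⟩ 1 (Or.inl rfl) ?_ ?_⟩ <;> norm_num

lemma sInf_scale {b : ℝ} (c : ℝ) (Q : ℝ → Prop) (hb0 : 0 < b) (hb1 : b < 1) (hc0 : 0 < c) (hc1 : c < 1) (hup : ∀ r, c < r → Q r) (hdown : ∀ r, 0 < r → Q r → c ≤ r) :
    sInf {t | 0 < t ∧ Q (b ^ (1/t))} = Real.log b / Real.log c := by
  have hlb : Real.log b < 0 := Real.log_neg hb0 hb1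
  have hlc : Real.log c < 0 := Real.log_neg hc0 hc1
  set t₀ := Real.log b / Real.log c with ht₀def
  have ht₀ : 0 < t₀ := by
    rw [ht₀def, ← neg_div_neg_eq]
    exact div_pos (by linarith) (by linarith)
  have hmem : ∀ t, t₀ < t → t ∈ {t | 0 < t ∧ Q (b ^ (1/t))} := by
    intro t ht
    have ht' : 0 < t := lt_trans ht₀ ht
    refine ⟨ht', hup _ ?_⟩
    have h1 : 1/t < 1/t₀ := one_div_lt_one_div_of_lt ht₀ ht
    have h2 : (1:ℝ)/t₀ = Real.log c / Real.log b := by rw [ht₀def, one_div_div]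
    rw [h2] at h1
    have h3 := mul_lt_mul_of_neg_right h1 hlb
    rw [div_mul_cancel₀ _ (ne_of_lt hlb)] at h3
    have h4 : Real.log c < Real.log (b ^ (1/t)) := by
      rw [Real.log_rpow hb0]
      linarith
    exact (Real.log_lt_log_iff hc0 (Real.rpow_pos_of_pos hb0 _)).mp h4
  have hlbd : ∀ t ∈ {t | 0 < t ∧ Q (b ^ (1/t))}, t₀ ≤ t := by
    rintro t ⟨ht, hQ⟩
    have h1 : c ≤ b ^ (1/t) := hdown _ (Real.rpow_pos_of_pos hb0 _) hQ
    have h2 : Real.log c ≤ (1/t) * Real.log b := by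
      rw [← Real.log_rpow hb0]
      exact (Real.log_le_log_iff hc0 (Real.rpow_pos_of_pos hb0 _)).mpr h1
    have h3 : 1/t ≤ Real.log c / Real.log b := (le_div_iff_of_neg hlb).mpr h2
    have h4 : 1/t ≤ 1/t₀ := by rw [ht₀def, one_div_div]; exact h3
    have h5 := (div_le_div_iff₀ ht ht₀).mp h4
    linarith
  refine le_antisymm ?_ (le_csInf ⟨t₀ + 1, hmem _ (by linarith)⟩ hlbd)
  refine le_of_forall_pos_le_add ?_
  intro ε hε
  exact csInf_le ⟨0, fun t ht => le_of_lt ht.1⟩ (hmem _ (by linarith))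

lemma subset_cb_iff_diam {F : Set (Fin n → ℝ)} (hne : F.Nonempty) (hbd : IsBounded F)
    {r : ℝ} (hr : 0 ≤ r) :
    (∃ z, F ⊆ closedBall z r) ↔ Metric.diam F ≤ 2*r := by
  constructor
  · rintro ⟨z, hz⟩
    refine Metric.diam_le_of_forall_dist_le (by linarith) (fun x hx y hy => ?_)
    have h1 : dist x z ≤ r := hz hx
    have h2 : dist y z ≤ r := hz hy
    calc dist x y ≤ dist x z + dist z y := dist_triangle _ _ _
      _ ≤ r + r := add_le_add h1 (by rwa [dist_comm])
      _ = 2*r := by ring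
  · intro hd
    obtain ⟨x₀, hx₀⟩ := hne
    have hbb : ∀ j : Fin n, BddAbove ((fun x : Fin n → ℝ => x j) '' F) ∧
        BddBelow ((fun x : Fin n → ℝ => x j) '' F) := by
      intro j
      obtain ⟨M, hM⟩ := Metric.isBounded_iff.mp hbd
      constructor
      · refine ⟨x₀ j + M, ?_⟩
        rintro u ⟨x, hx, rfl⟩
        have h1 : dist (x j) (x₀ j) ≤ dist x x₀ := dist_le_pi_dist _ _ _
        have h2 := hM hx hx₀
        rw [Real.dist_eq] at h1
        have := le_abs_self (x j - x₀ j)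
        linarith
      · refine ⟨x₀ j - M, ?_⟩
        rintro u ⟨x, hx, rfl⟩
        have h1 : dist (x j) (x₀ j) ≤ dist x x₀ := dist_le_pi_dist _ _ _
        have h2 := hM hx hx₀
        rw [Real.dist_eq] at h1
        have := neg_abs_le (x j - x₀ j)
        linarith
    refine ⟨fun j => (sInf ((fun x : Fin n → ℝ => x j) '' F) +
      sSup ((fun x : Fin n → ℝ => x j) '' F))/2, fun x hx => ?_⟩
    rw [mem_cb_pi hr]
    intro j
    show |x j - (sInf ((fun x : Fin n → ℝ => x j) '' F) +
      sSup ((fun x : Fin n → ℝ => x j) '' F))/2| ≤ r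
    set Pj := (fun x : Fin n → ℝ => x j) '' F with hPj
    have hPne : Pj.Nonempty := ⟨x₀ j, ⟨x₀, hx₀, rfl⟩⟩
    have hgap : sSup Pj ≤ sInf Pj + 2*r := by
      apply csSup_le hPne
      rintro u ⟨xu, hxu, rfl⟩
      have h3 : xu j - 2*r ≤ sInf Pj := by
        apply le_csInf hPne
        rintro v ⟨xv, hxv, rfl⟩
        have h1 : dist (xu j) (xv j) ≤ dist xu xv := dist_le_pi_dist _ _ _
        have h2 : dist xu xv ≤ Metric.diam F := Metric.dist_le_diam_of_mem hbd hxu hxv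
        rw [Real.dist_eq] at h1
        have := le_abs_self (xu j - xv j)
        linarith
      linarith
    have hxle : x j ≤ sSup Pj := le_csSup (hbb j).1 ⟨x, hx, rfl⟩
    have hxge : sInf Pj ≤ x j := csInf_le (hbb j).2 ⟨x, hx, rfl⟩
    rw [abs_le]
    constructor <;> [linarith; linarith]

lemma meet_iff_dist {P Q : Set (Fin n → ℝ)} {r : ℝ} (hr : 0 ≤ r) :
    (∃ z, (closedBall z r ∩ P).Nonempty ∧ (closedBall z r ∩ Q).Nonempty)
      ↔ ∃ p ∈ P, ∃ q ∈ Q, dist p q ≤ 2*r := by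
  constructor
  · rintro ⟨z, ⟨p, hp1, hp2⟩, ⟨q, hq1, hq2⟩⟩
    refine ⟨p, hp2, q, hq2, ?_⟩
    have h1 : dist p z ≤ r := mem_closedBall.mp hp1
    have h2 : dist q z ≤ r := mem_closedBall.mp hq1
    calc dist p q ≤ dist p z + dist z q := dist_triangle _ _ _
      _ ≤ r + r := add_le_add h1 (by rwa [dist_comm])
      _ = 2*r := by ring
  · rintro ⟨p, hp, q, hq, hpq⟩
    refine ⟨fun j => (p j + q j)/2, ⟨p, ?_, hp⟩, ⟨q, ?_, hq⟩⟩
    · rw [mem_closedBall, dist_pi_le_iff hr]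
      intro j
      show dist (p j) ((p j + q j)/2) ≤ r
      have h1 : dist (p j) (q j) ≤ dist p q := dist_le_pi_dist _ _ _
      rw [Real.dist_eq] at h1 ⊢
      rw [show p j - (p j + q j)/2 = (p j - q j)/2 by ring, abs_div, abs_two]
      linarith
    · rw [mem_closedBall, dist_pi_le_iff hr]
      intro j
      show dist (q j) ((p j + q j)/2) ≤ r
      have h1 : dist (p j) (q j) ≤ dist p q := dist_le_pi_dist _ _ _
      rw [Real.dist_eq] at h1 ⊢
      rw [show q j - (p j + q j)/2 = -((p j - q j)/2) by ring, abs_neg, abs_div, abs_two]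
      linarith

lemma phi_lt (b c₁ c₂ : ℝ) (hb0 : 0 < b) (hb1 : b < 1) (h0 : 0 < c₁) (h12 : c₁ < c₂)
    (h2 : c₂ < 1) : Real.log b / Real.log c₁ < Real.log b / Real.log c₂ := by
  have hlb : Real.log b < 0 := Real.log_neg hb0 hb1
  have hl1 : Real.log c₁ < 0 := Real.log_neg h0 (lt_trans h12 h2)
  have hl2 : Real.log c₂ < 0 := Real.log_neg (lt_trans h0 h12) h2
  have h12' : Real.log c₁ < Real.log c₂ := (Real.log_lt_log_iff h0 (lt_trans h0 h12)).mpr h12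
  have h := div_lt_div_of_pos_left (show (0:ℝ) < -Real.log b by linarith)
    (show (0:ℝ) < -Real.log c₂ by linarith) (show -Real.log c₂ < -Real.log c₁ by linarith)
  rwa [neg_div_neg_eq, neg_div_neg_eq] at h

lemma ratio_transfer {C : Set (Fin n → ℝ)} (hE : (unboundedGap C).Nonempty)
    (J₁ J₂ : Set ℕ) (G₁ G₂ : ℕ → Set (Fin n → ℝ))
    (gap₁ : ∀ k ∈ J₁, IsBoundedGap C (G₁ k))
    (inj₁ : ∀ k ∈ J₁, ∀ l ∈ J₁, G₁ k = G₁ l → k = l)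
    (anti₁ : ∀ k ∈ J₁, ∀ l ∈ J₁, k ≤ l → Metric.diam (G₁ l) ≤ Metric.diam (G₁ k))
    (surj₂ : ∀ G', IsBoundedGap C G' → ∃ k ∈ J₂, G₂ k = G')
    (τ' : ℝ) (hτ' : 0 ≤ τ')
    (hlow : ∀ m ∈ J₂, τ' * Metric.diam (G₂ m) ≤
      setDist (G₂ m) (unboundedGap C ∪ ⋃ j ∈ J₂ ∩ Iio m, G₂ j))
    {k : ℕ} (hk : k ∈ J₁) :
    τ' * Metric.diam (G₁ k) ≤ setDist (G₁ k) (unboundedGap C ∪ ⋃ j ∈ J₁ ∩ Iio k, G₁ j) := by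
  obtain ⟨m, hm, hGm⟩ := surj₂ (G₁ k) (gap₁ k hk)
  obtain ⟨a₀, ha₀⟩ := (gap₁ k hk).nonempty
  obtain ⟨p₀, hp₀⟩ := hE
  have hne : {r | ∃ a ∈ G₁ k, ∃ c ∈ (unboundedGap C ∪ ⋃ j ∈ J₁ ∩ Iio k, G₁ j), r = dist a c}.Nonempty :=
    ⟨dist a₀ p₀, ⟨a₀, ha₀, p₀, Or.inl hp₀, rfl⟩⟩
  rw [setDist]
  refine le_csInf hne ?_
  rintro r ⟨a, ha, y, hy, rfl⟩
  rcases hy with hyE | hyU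
  · calc τ' * Metric.diam (G₁ k) = τ' * Metric.diam (G₂ m) := by rw [hGm]
      _ ≤ setDist (G₂ m) (unboundedGap C ∪ ⋃ j ∈ J₂ ∩ Iio m, G₂ j) := hlow m hm
      _ ≤ dist a y := setDist_le (by rw [hGm]; exact ha) (Or.inl hyE)
  · simp only [mem_iUnion, exists_prop] at hyU
    obtain ⟨i, ⟨hiJ, hik⟩, hyi⟩ := hyU
    obtain ⟨m', hm', hGm'⟩ := surj₂ (G₁ i) (gap₁ i hiJ)
    have hne : G₁ i ≠ G₁ k := fun h => absurd (inj₁ i hiJ k hk h) (Nat.ne_of_lt hik)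
    have hmm' : m' ≠ m := fun h => hne (by rw [← hGm', h, hGm])
    have hdiam : Metric.diam (G₁ k) ≤ Metric.diam (G₁ i) := anti₁ i hiJ k hk (le_of_lt hik)
    rcases lt_or_gt_of_ne hmm' with hlt | hgt
    · calc τ' * Metric.diam (G₁ k) = τ' * Metric.diam (G₂ m) := by rw [hGm]
        _ ≤ setDist (G₂ m) (unboundedGap C ∪ ⋃ j ∈ J₂ ∩ Iio m, G₂ j) := hlow m hm
        _ ≤ dist a y := setDist_le (by rw [hGm]; exact ha)
            (Or.inr (Set.mem_biUnion ⟨hm', hlt⟩ (by rw [hGm']; exact hyi)))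
    · calc τ' * Metric.diam (G₁ k) ≤ τ' * Metric.diam (G₂ m') := by
            rw [hGm']; exact mul_le_mul_of_nonneg_left hdiam hτ'
        _ ≤ setDist (G₂ m') (unboundedGap C ∪ ⋃ j ∈ J₂ ∩ Iio m', G₂ j) := hlow m' hm'
        _ ≤ dist y a := setDist_le (by rw [hGm']; exact hyi)
            (Or.inr (Set.mem_biUnion ⟨hm, hgt⟩ (by rw [hGm]; exact ha)))
        _ = dist a y := dist_comm y a

end ProofHelpers

/-- for a homothetic matrix `A = βI`, affine thickness is
`−log_β` of the Falconer–Yavicoli thickness. -/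
theorem thicknessA_eq_neg_logb_FYthickness (n : ℕ) (b : ℝ) (hb : b ∈ Set.Ioo (0 : ℝ) 1)
    (C : Set (Fin n → ℝ)) (hC : IsCompact C) (hsub : C ⊆ closedBall 0 1)
    (d : DiamEnum C) (τ : ℝ) (hτpos : 0 < τ)
    (hτ : FYthickness C d = ENNReal.ofReal τ) :
    ∀ e : GapEnum (fun _ => b) C,
      thicknessA (fun _ => b) C e = ((- Real.logb b τ : ℝ) : EReal) := by
  obtain ⟨hb0, hb1⟩ := hb
  intro e
  have hlb : Real.log b < 0 := Real.log_neg hb0 hb1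
  -- d.J is nonempty
  have hdJ : d.J ≠ ∅ := by
    intro h
    rw [FYthickness, if_pos h] at hτ
    split_ifs at hτ with h2
    · exact ENNReal.ofReal_ne_top hτ.symm
    · rw [eq_comm, ENNReal.ofReal_eq_zero] at hτ
      linarith
  have hτ' : (⨅ k ∈ d.J, ENNReal.ofReal
      (setDist (d.G k) (unboundedGap C ∪ ⋃ j ∈ d.J ∩ Iio k, d.G j) / Metric.diam (d.G k)))
      = ENNReal.ofReal τ := by
    rwa [FYthickness, if_neg hdJ] at hτ
  obtain ⟨m₀, hm₀⟩ := Set.nonempty_iff_ne_empty.mpr hdJ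
  -- the dimension is positive
  have hn : 0 < n := by
    by_contra hn
    have hnn : n = 0 := by omega
    have hdiam0 : Metric.diam (d.G m₀) = 0 := by
      apply Metric.diam_subsingleton
      intro x _ y _
      funext i
      exact absurd i.isLt (by omega)
    have h1 : ENNReal.ofReal τ ≤ 0 := by
      rw [← hτ']
      refine le_trans (iInf₂_le m₀ hm₀) ?_
      rw [hdiam0, div_zero, ENNReal.ofReal_zero]
    rw [nonpos_iff_eq_zero, ENNReal.ofReal_eq_zero] at h1
    linarith
  have hE : (unboundedGap C).Nonempty := unboundedGap_nonempty hn hsub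
  have hDpos : ∀ G, IsBoundedGap C G → 0 < Metric.diam G := fun G h => gap_diam_pos hn hC h
  -- lower bounds from the FY thickness, for the diameter enumeration
  have hlowd : ∀ m ∈ d.J, τ * Metric.diam (d.G m) ≤
      setDist (d.G m) (unboundedGap C ∪ ⋃ j ∈ d.J ∩ Iio m, d.G j) := by
    intro m hm
    have h1 : ENNReal.ofReal τ ≤ ENNReal.ofReal
        (setDist (d.G m) (unboundedGap C ∪ ⋃ j ∈ d.J ∩ Iio m, d.G j) / Metric.diam (d.G m)) := by
      rw [← hτ']
      exact iInf₂_le m hm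
    have h2 := (ENNReal.ofReal_le_ofReal_iff
      (div_nonneg (setDist_nonneg _ _) Metric.diam_nonneg)).mp h1
    exact (le_div_iff₀ (hDpos _ (d.isGap m hm))).mp h2
  -- every bounded gap has diameter < 2
  have hD2 : ∀ G, IsBoundedGap C G → Metric.diam G < 2 := by
    intro G hG
    obtain ⟨m, hm, hGm⟩ := d.surj G hG
    have h1 := hlowd m hm
    have h2 := setDist_le_two_sub_diam (S := unboundedGap C ∪ ⋃ j ∈ d.J ∩ Iio m, d.G j)
      hsub (d.isGap m hm) Set.subset_union_left (hDpos _ (d.isGap m hm))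
    rw [hGm] at h1 h2
    nlinarith [hDpos G hG, hτpos]
  -- the size of a bounded gap
  have hsize : ∀ G, IsBoundedGap C G →
      sizeWrt (fun _ : Fin n => b) G = Real.log b / Real.log (Metric.diam G / 2) := by
    intro G hG
    have hD0 := hDpos G hG
    have hD2' := hD2 G hG
    rw [sizeWrt]
    have hset : {t | 0 < t ∧ ∃ z, G ⊆ affBox (fun _ : Fin n => b) (1/t) z}
        = {t | 0 < t ∧ (fun r => ∃ z, G ⊆ closedBall z r) (b ^ (1/t))} := by
      simp only [affBox_eq hb0]
    rw [hset]
    refine sInf_scale (Metric.diam G / 2) (fun r => ∃ z, G ⊆ closedBall z r) hb0 hb1 (by linarith) (by linarith) (fun r hr => ?_) (fun r hr hQ => ?_)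
    · have h0r : 0 ≤ r := le_trans (div_nonneg Metric.diam_nonneg (by norm_num)) hr.le
      exact (subset_cb_iff_diam hG.nonempty hG.2 h0r).mpr (by linarith)
    · have := (subset_cb_iff_diam hG.nonempty hG.2 hr.le).mp hQ
      linarith
  -- the gap distance
  have hgd : ∀ k ∈ e.J, ∀ δ : ℝ,
      δ = setDist (e.G k) ((⋃ i ∈ e.J ∩ Iio k, e.G i) ∪ unboundedGap C) →
      0 < δ → δ < 2 →
      gapDist (fun _ : Fin n => b) C e k = Real.log b / Real.log (δ / 2) := by
    intro k hk δ hδdef hδ0 hδ2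
    rw [gapDist]
    have hset : {t | 0 < t ∧ ∃ z, (affBox (fun _ : Fin n => b) (1/t) z ∩ e.G k).Nonempty ∧
          (affBox (fun _ : Fin n => b) (1/t) z ∩
            ((⋃ i ∈ e.J ∩ Iio k, e.G i) ∪ unboundedGap C)).Nonempty}
        = {t | 0 < t ∧ (fun r => ∃ z, (closedBall z r ∩ e.G k).Nonempty ∧
          (closedBall z r ∩ ((⋃ i ∈ e.J ∩ Iio k, e.G i) ∪ unboundedGap C)).Nonempty)
            (b ^ (1/t))} := by
      simp only [affBox_eq hb0]
    rw [hset]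
    have hSne : ((⋃ i ∈ e.J ∩ Iio k, e.G i) ∪ unboundedGap C).Nonempty :=
      hE.mono Set.subset_union_right
    obtain ⟨a₀, ha₀⟩ := (e.isGap k hk).nonempty
    obtain ⟨q₀, hq₀⟩ := hSne
    refine sInf_scale (δ / 2) (fun r => ∃ z, (closedBall z r ∩ e.G k).Nonempty ∧
      (closedBall z r ∩ ((⋃ i ∈ e.J ∩ Iio k, e.G i) ∪ unboundedGap C)).Nonempty) hb0 hb1 (by linarith) (by linarith) (fun r hr => ?_) (fun r hr hQ => ?_)
    · have h0r : 0 < r := lt_of_le_of_lt (by linarith) hr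
      have h1 : setDist (e.G k) ((⋃ i ∈ e.J ∩ Iio k, e.G i) ∪ unboundedGap C) < 2*r := by
        rw [← hδdef]; linarith
      rw [setDist] at h1
      have hne2 : {r | ∃ a ∈ e.G k,
          ∃ c ∈ ((⋃ i ∈ e.J ∩ Iio k, e.G i) ∪ unboundedGap C), r = dist a c}.Nonempty :=
        ⟨dist a₀ q₀, ⟨a₀, ha₀, q₀, hq₀, rfl⟩⟩
      obtain ⟨x, hx, hxlt⟩ := exists_lt_of_csInf_lt hne2 h1
      obtain ⟨p, hp, q, hq, rfl⟩ := hx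
      exact (meet_iff_dist h0r.le).mpr ⟨p, hp, q, hq, le_of_lt hxlt⟩
    · obtain ⟨p, hp, q, hq, hpq⟩ := (meet_iff_dist hr.le).mp hQ
      have h1 : δ ≤ dist p q := hδdef ▸ setDist_le hp hq
      linarith
  -- the enumeration e is non-increasing in diameter
  have hanti_e : ∀ k ∈ e.J, ∀ l ∈ e.J, k ≤ l → Metric.diam (e.G l) ≤ Metric.diam (e.G k) := by
    intro k hk l hl hkl
    by_contra hcon
    push_neg at hcon
    have h1 := e.anti k hk l hl hkl
    rw [hsize _ (e.isGap k hk), hsize _ (e.isGap l hl)] at h1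
    have h2 := phi_lt b (Metric.diam (e.G k) / 2) (Metric.diam (e.G l) / 2) hb0 hb1
      (by linarith [hDpos _ (e.isGap k hk)]) (by linarith) (by linarith [hD2 _ (e.isGap l hl)])
    linarith
  obtain ⟨k₀, hk₀, -⟩ := e.surj (d.G m₀) (d.isGap m₀ hm₀)
  -- transfer the lower bound to the enumeration e
  have hlowe : ∀ k ∈ e.J, τ * Metric.diam (e.G k) ≤
      setDist (e.G k) (unboundedGap C ∪ ⋃ i ∈ e.J ∩ Iio k, e.G i) :=
    fun k hk => ratio_transfer hE e.J d.J e.G d.G e.isGap e.inj hanti_e d.surj τ hτpos.le hlowd hk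
  set R : Set ℝ := (fun k => setDist (e.G k) (unboundedGap C ∪ ⋃ i ∈ e.J ∩ Iio k, e.G i)
      / Metric.diam (e.G k)) '' e.J with hR
  have hRne : R.Nonempty := ⟨_, ⟨k₀, hk₀, rfl⟩⟩
  have hRlb : ∀ r ∈ R, τ ≤ r := by
    rintro r ⟨k, hk, rfl⟩
    exact (le_div_iff₀ (hDpos _ (e.isGap k hk))).mpr (hlowe k hk)
  set ρ := sInf R with hρdef
  have hρτ : τ ≤ ρ := le_csInf hRne hRlb
  have hlow2 : ∀ k ∈ e.J, ρ * Metric.diam (e.G k) ≤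
      setDist (e.G k) (unboundedGap C ∪ ⋃ i ∈ e.J ∩ Iio k, e.G i) := by
    intro k hk
    have h1 : ρ ≤ setDist (e.G k) (unboundedGap C ∪ ⋃ i ∈ e.J ∩ Iio k, e.G i)
        / Metric.diam (e.G k) := csInf_le ⟨τ, hRlb⟩ ⟨k, hk, rfl⟩
    exact (le_div_iff₀ (hDpos _ (e.isGap k hk))).mp h1
  have hlowd2 : ∀ m ∈ d.J, ρ * Metric.diam (d.G m) ≤
      setDist (d.G m) (unboundedGap C ∪ ⋃ j ∈ d.J ∩ Iio m, d.G j) :=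
    fun m hm => ratio_transfer hE d.J e.J d.G e.G d.isGap d.inj d.anti e.surj ρ
      (le_trans hτpos.le hρτ) hlow2 hm
  have hρτ' : ρ ≤ τ := by
    have h1 : ENNReal.ofReal ρ ≤ ENNReal.ofReal τ := by
      rw [← hτ']
      refine le_iInf₂ (fun m hm => ?_)
      exact ENNReal.ofReal_le_ofReal
        ((le_div_iff₀ (hDpos _ (d.isGap m hm))).mpr (hlowd2 m hm))
    exact (ENNReal.ofReal_le_ofReal_iff hτpos.le).mp h1
  have hρ : ρ = τ := le_antisymm hρτ' hρτ
  have hexe : ∀ ε : ℝ, 0 < ε → ∃ k ∈ e.J,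
      setDist (e.G k) (unboundedGap C ∪ ⋃ i ∈ e.J ∩ Iio k, e.G i)
        / Metric.diam (e.G k) < τ + ε := by
    intro ε hε
    have h1 : sInf R < τ + ε := by rw [← hρdef, hρ]; linarith
    obtain ⟨r, ⟨k, hk, rfl⟩, hr⟩ := exists_lt_of_csInf_lt hRne h1
    exact ⟨k, hk, hr⟩
  -- the per-gap value of the affine thickness
  have hfacts : ∀ k ∈ e.J, (0 < gapDist (fun _ : Fin n => b) C e k) ∧
      (invE (sizeWrt (fun _ : Fin n => b) (e.G k)) - invE (gapDist (fun _ : Fin n => b) C e k)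
      = ((-(Real.log (setDist (e.G k) (unboundedGap C ∪ ⋃ i ∈ e.J ∩ Iio k, e.G i)
          / Metric.diam (e.G k)) / Real.log b) : ℝ) : EReal)) := by
    intro k hk
    set D := Metric.diam (e.G k) with hDdef
    set δ := setDist (e.G k) (unboundedGap C ∪ ⋃ i ∈ e.J ∩ Iio k, e.G i) with hδdef
    have hD0 : 0 < D := hDpos _ (e.isGap k hk)
    have hD2' : D < 2 := hD2 _ (e.isGap k hk)
    have hδ0 : 0 < δ := lt_of_lt_of_le (mul_pos hτpos hD0) (hlowe k hk)
    have hδle : δ ≤ 2 - D :=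
      setDist_le_two_sub_diam (S := unboundedGap C ∪ ⋃ i ∈ e.J ∩ Iio k, e.G i)
        hsub (e.isGap k hk) Set.subset_union_left hD0
    have hδ2 : δ < 2 := by linarith
    have hgdk : gapDist (fun _ : Fin n => b) C e k = Real.log b / Real.log (δ / 2) := by
      refine hgd k hk δ ?_ hδ0 hδ2
      rw [hδdef, Set.union_comm]
    have hsz : sizeWrt (fun _ : Fin n => b) (e.G k) = Real.log b / Real.log (D/2) :=
      hsize _ (e.isGap k hk)
    have hlD : Real.log (D/2) < 0 := Real.log_neg (by linarith) (by linarith)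
    have hlδ : Real.log (δ/2) < 0 := Real.log_neg (by linarith) (by linarith)
    have hszpos : 0 < Real.log b / Real.log (D/2) := by
      rw [← neg_div_neg_eq]
      exact div_pos (by linarith) (by linarith)
    have hgdpos : 0 < Real.log b / Real.log (δ/2) := by
      rw [← neg_div_neg_eq]
      exact div_pos (by linarith) (by linarith)
    refine ⟨by rw [hgdk]; exact hgdpos, ?_⟩
    rw [hsz, hgdk]
    simp only [invE, if_neg (ne_of_gt hszpos), if_neg (ne_of_gt hgdpos)]
    rw [inv_div, inv_div, ← EReal.coe_sub]
    congr 1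
    rw [div_sub_div_same, Real.log_div (ne_of_gt hD0) two_ne_zero,
      Real.log_div (ne_of_gt hδ0) two_ne_zero, Real.log_div (ne_of_gt hδ0) (ne_of_gt hD0)]
    ring
  -- unfold the affine thickness
  rw [thicknessA, if_neg (Set.nonempty_iff_ne_empty.mp ⟨k₀, hk₀⟩),
    if_neg (by push_neg; exact fun k hk => (hfacts k hk).1.ne')]
  have hgoal : (-Real.logb b τ : ℝ) = -(Real.log τ / Real.log b) := by rw [Real.logb]
  rw [hgoal]
  have hA : (0:ℝ) < -Real.log b := by linarith
  refine le_antisymm ?_ ?_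
  · -- upper bound for the infimum
    have hub : ∀ ε : ℝ, 0 < ε →
        (⨅ k ∈ e.J, (invE (sizeWrt (fun _ : Fin n => b) (e.G k)) -
          invE (gapDist (fun _ : Fin n => b) C e k)))
        ≤ (((-(Real.log τ / Real.log b)) + ε : ℝ) : EReal) := by
      intro ε hε
      have hexp1 : 1 < Real.exp (ε * (-Real.log b)) := by
        have := Real.add_one_le_exp (ε * (-Real.log b))
        nlinarith
      have hε'0 : 0 < τ * (Real.exp (ε * (-Real.log b)) - 1) := mul_pos hτpos (by linarith)
      obtain ⟨k, hk, hklt⟩ := hexe _ hε'0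
      refine le_trans (iInf₂_le k hk) ?_
      rw [(hfacts k hk).2, EReal.coe_le_coe_iff]
      set r := setDist (e.G k) (unboundedGap C ∪ ⋃ i ∈ e.J ∩ Iio k, e.G i)
        / Metric.diam (e.G k) with hrdef
      have hrτ : τ ≤ r := hRlb r ⟨k, hk, rfl⟩
      have hr0 : 0 < r := lt_of_lt_of_le hτpos hrτ
      have h1 : r < τ * Real.exp (ε * (-Real.log b)) := by nlinarith
      have h2 : Real.log r < Real.log τ + ε * (-Real.log b) := by
        have h3 := (Real.log_lt_log_iff hr0 (by positivity)).mpr h1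
        rwa [Real.log_mul (ne_of_gt hτpos) (ne_of_gt (Real.exp_pos _)), Real.log_exp] at h3
      rw [← div_neg, ← div_neg, div_le_iff₀ hA, add_mul, div_mul_cancel₀ _ (ne_of_gt hA)]
      linarith
    have habs : ∀ L : EReal,
        (∀ ε : ℝ, 0 < ε → L ≤ (((-(Real.log τ / Real.log b)) + ε : ℝ) : EReal)) →
        L ≤ (((-(Real.log τ / Real.log b)) : ℝ) : EReal) := by
      intro L hL
      induction L using EReal.rec with
      | bot => exact bot_le
      | coe l =>
        rw [EReal.coe_le_coe_iff]
        refine le_of_forall_pos_le_add (fun ε hε => ?_)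
        exact EReal.coe_le_coe_iff.mp (hL ε hε)
      | top =>
        exact absurd (hL 1 one_pos) (not_le.mpr (EReal.coe_lt_top _))
    exact habs _ hub
  · -- lower bound for the infimum
    refine le_iInf₂ (fun k hk => ?_)
    rw [(hfacts k hk).2, EReal.coe_le_coe_iff]
    set r := setDist (e.G k) (unboundedGap C ∪ ⋃ i ∈ e.J ∩ Iio k, e.G i)
      / Metric.diam (e.G k) with hrdef
    have hrτ : τ ≤ r := hRlb r ⟨k, hk, rfl⟩
    have hr0 : 0 < r := lt_of_lt_of_le hτpos hrτ
    have h2 : Real.log τ ≤ Real.log r := (Real.log_le_log_iff hτpos hr0).mpr hrτ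
    rw [← div_neg, ← div_neg]
    exact (div_le_div_iff_of_pos_right hA).mpr h2
end

section
/- Let n ≥ 2, work in ℝⁿ with the sup metric, and let 0 < t < s < r < 1/4. Let x = (3/4, 0, …, 0) ∈ ℝⁿ and define C₁ = (B[x,1/4] ∖ B°(x,r)) ∪ {x} ∪ (B[−x,1/4] ∖ B°(−x,r)) and C₂ = (B[x,s] ∖ B°(x,t)) ∪ {−x}, where B°(z,ρ) is the open ball. Let A be a diagonal n×n matrix with diagonal entries β₁₁,…,βₙₙ ∈ (0,1), and set β_min = min_j β_jj and β_max = max_j β_jj. Then τ_A(C₁) = log_{β_min}(r) − log_{β_max}(1/8 − r/2) and τ_A(C₂) = log_{β_min}(t) − log_{β_max}((s − t)/2). -/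
open Metric Set Topology Filter
open scoped ENNReal Classical

section Helpers

open Real Metric Set Bornology

lemma key_le_iff {b γ t : ℝ} (hb : 0 < b) (hb1 : b < 1) (hγ : 0 < γ) (hγ1 : γ < 1)
    (ht : 0 < t) : γ ≤ b ^ (1/t : ℝ) ↔ 1 / Real.logb b γ ≤ t := by
  have hL : 0 < Real.logb b γ := Real.logb_pos_of_base_lt_one hb hb1 hγ hγ1
  rw [← Real.le_logb_iff_rpow_le_of_base_lt_one hb hb1 hγ, div_le_iff₀ ht, div_le_iff₀ hL,
    mul_comm]

lemma key_lt_iff {b γ t : ℝ} (hb : 0 < b) (hb1 : b < 1) (hγ : 0 < γ) (hγ1 : γ < 1)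
    (ht : 0 < t) : γ < b ^ (1/t : ℝ) ↔ 1 / Real.logb b γ < t := by
  have hL : 0 < Real.logb b γ := Real.logb_pos_of_base_lt_one hb hb1 hγ hγ1
  rw [← Real.lt_logb_iff_rpow_lt_of_base_lt_one hb hb1 hγ, div_lt_iff₀ ht, div_lt_iff₀ hL,
    mul_comm]

/-- A ray to infinity inside the complement shows membership in the unbounded gap. -/
lemma mem_unboundedGap_of_ray {n : ℕ} {C : Set (Fin n → ℝ)} {q d : Fin n → ℝ} (j : Fin n)
    (hdj : 1 ≤ |d j|) (hray : ∀ τ : ℝ, 0 ≤ τ → q + τ • d ∈ Cᶜ) :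
    q ∈ unboundedGap C := by
  have hq : q ∈ Cᶜ := by simpa using hray 0 le_rfl
  refine ⟨hq, fun hb => ?_⟩
  set Ray : Set (Fin n → ℝ) := (fun τ : ℝ => q + τ • d) '' Ici 0 with hRay
  have hqR : q ∈ Ray := ⟨0, by simp, by simp⟩
  have hRsub : Ray ⊆ connectedComponentIn Cᶜ q := by
    apply IsPreconnected.subset_connectedComponentIn
    · exact (isPreconnected_Ici).image _
        ((continuous_const.add (continuous_id.smul continuous_const)).continuousOn)
    · exact hqR
    · rintro - ⟨τ, hτ, rfl⟩; exact hray τ hτ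
  have hb' : IsBounded Ray := hb.subset hRsub
  obtain ⟨K, hK⟩ := hb'.subset_closedBall 0
  have hK0 : 0 ≤ K := by
    have := hK hqR; simp [dist_eq_norm] at this
    exact le_trans (norm_nonneg q) this
  set τ₀ : ℝ := K + |q j| + 1 with hτ₀
  have hτ₀0 : 0 ≤ τ₀ := by positivity
  have hmem : q + τ₀ • d ∈ Ray := ⟨τ₀, hτ₀0, rfl⟩
  have h1 : ‖q + τ₀ • d‖ ≤ K := by simpa [dist_eq_norm] using hK hmem
  have h2 : |(q + τ₀ • d) j| ≤ ‖q + τ₀ • d‖ := by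
    rw [← Real.norm_eq_abs]; exact norm_le_pi_norm _ j
  have h3 : τ₀ ≤ |τ₀ * d j| := by
    rw [abs_mul, abs_of_nonneg hτ₀0]
    nlinarith [abs_nonneg (q j)]
  have h4 : |τ₀ * d j| ≤ |q j + τ₀ * d j| + |q j| := by
    have h4' := abs_add_le (q j + τ₀ * d j) (-(q j))
    have he : q j + τ₀ * d j + -q j = τ₀ * d j := by ring
    rw [he, abs_neg] at h4'
    exact h4'
  have h6 : (q + τ₀ • d) j = q j + τ₀ * d j := by
    simp [Pi.add_apply, Pi.smul_apply, smul_eq_mul]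
  rw [h6] at h2
  nlinarith [abs_nonneg (q j)]

end Helpers
section Helpers2

open Real Metric Set Bornology

lemma connectedComponentIn_eq_of_clopen {n : ℕ} {C P V : Set (Fin n → ℝ)}
    (hPc : IsPreconnected P) (hPo : IsOpen P) (hVo : IsOpen V) (hdisj : Disjoint P V)
    (hunion : Cᶜ = P ∪ V) {p : Fin n → ℝ} (hp : p ∈ P) :
    connectedComponentIn Cᶜ p = P := by
  apply le_antisymm
  · apply IsPreconnected.subset_left_of_subset_union hPo hVo hdisj
    · rw [← hunion]; exact connectedComponentIn_subset _ _
    · exact ⟨p, mem_connectedComponentIn (by rw [hunion]; exact Or.inl hp), hp⟩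
    · exact isPreconnected_connectedComponentIn
  · exact hPc.subset_connectedComponentIn hp (by rw [hunion]; exact subset_union_left)

/-- The punctured sup-ball is preconnected when `n ≥ 2`. -/
lemma isPreconnected_ball_diff_singleton {n : ℕ} (hn : 2 ≤ n) (c : Fin n → ℝ) {ρ : ℝ}
    (hρ : 0 < ρ) : IsPreconnected (ball c ρ \ {c}) := by
  have hrank : 1 < Module.rank ℝ (Fin n → ℝ) := by
    rw [rank_fin_fun]
    exact_mod_cast Nat.lt_of_lt_of_le Nat.one_lt_two hn
  have h0n : 0 < n := by omega
  set j0 : Fin n := ⟨0, h0n⟩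
  set e0 : Fin n → ℝ := Pi.single j0 1 with he0
  set seg : Set (Fin n → ℝ) := (fun τ : ℝ => c + τ • e0) '' Ioo 0 ρ with hseg
  have hsegc : IsPreconnected seg :=
    isPreconnected_Ioo.image _
      ((continuous_const.add (continuous_id.smul continuous_const)).continuousOn)
  have hdist : ∀ τ : ℝ, 0 ≤ τ → dist (c + τ • e0) c = τ := by
    intro τ hτ
    have h1 : dist (c + τ • e0) c ≤ τ := by
      rw [dist_pi_le_iff hτ]
      intro i
      by_cases hi : i = j0 <;>
        simp [Real.dist_eq, he0, Pi.single_apply, hi, abs_of_nonneg hτ, hτ]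
    have h2 : τ ≤ dist (c + τ • e0) c := by
      have := dist_le_pi_dist (c + τ • e0) c j0
      simpa [Real.dist_eq, he0, Pi.single_apply, abs_of_nonneg hτ] using this
    linarith
  have hsegsub : seg ⊆ ball c ρ \ {c} := by
    rintro - ⟨τ, ⟨hτ0, hτρ⟩, rfl⟩
    refine ⟨by rw [mem_ball, hdist τ hτ0.le]; exact hτρ, ?_⟩
    simp only [mem_singleton_iff]
    intro h
    have := hdist τ hτ0.le
    rw [h] at this
    simp at this
    linarith
  have hx0 : c + (ρ/2) • e0 ∈ seg := ⟨ρ/2, ⟨by linarith, by linarith⟩, rfl⟩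
  have hmain : ball c ρ \ {c} =
      ⋃ a ∈ Ioo (0:ℝ) ρ, (sphere c a ∪ seg) := by
    ext y
    simp only [mem_iUnion, mem_union, exists_prop]
    constructor
    · rintro ⟨hy, hyc⟩
      refine ⟨dist y c, ⟨?_, mem_ball.mp hy⟩, Or.inl rfl⟩
      rw [dist_pos]
      simpa using hyc
    · rintro ⟨a, ⟨ha0, haρ⟩, hy | hy⟩
      · constructor
        · rw [mem_ball]; rw [mem_sphere] at hy; linarith [hy.le, hy.ge]
        · simp only [mem_singleton_iff]
          intro h
          rw [mem_sphere, h, dist_self] at hy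
          linarith
      · exact hsegsub hy
  rw [hmain, ← sUnion_image]
  apply isPreconnected_sUnion (c + (ρ/2) • e0)
  · rintro s ⟨a, ha, rfl⟩
    exact Or.inr hx0
  · rintro s ⟨a, ha, rfl⟩
    apply IsPreconnected.union (c + a • e0)
    · rw [mem_sphere]; exact hdist a ha.1.le
    · exact ⟨a, ha, rfl⟩
    · exact isPreconnected_sphere hrank c a
    · exact hsegc

end Helpers2
section Helpers3

open Real Metric Set Bornology

lemma gap_classify {n : ℕ} {C P Q W : Set (Fin n → ℝ)}
    (hcompl : Cᶜ = P ∪ Q ∪ W)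
    (hPo : IsOpen P) (hQo : IsOpen Q) (hWo : IsOpen W)
    (hPQ : Disjoint P Q) (hPW : Disjoint P W) (hQW : Disjoint Q W)
    (hPc : IsPreconnected P) (hQc : IsPreconnected Q)
    (hPb : IsBounded P) (hQb : IsBounded Q)
    (hW : ∀ w ∈ W, ¬ IsBounded (connectedComponentIn Cᶜ w)) :
    (∀ p ∈ P, connectedComponentIn Cᶜ p = P) ∧
    (∀ q ∈ Q, connectedComponentIn Cᶜ q = Q) ∧
    (∀ G, IsBoundedGap C G → G = P ∨ G = Q) ∧
    (unboundedGap C ⊆ W) := by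
  have hcompl' : Cᶜ = P ∪ (Q ∪ W) := by rw [hcompl, union_assoc]
  have hcomplQ : Cᶜ = Q ∪ (P ∪ W) := by
    rw [hcompl']; ext y; simp only [mem_union]; tauto
  have compP : ∀ p ∈ P, connectedComponentIn Cᶜ p = P := fun p hp =>
    connectedComponentIn_eq_of_clopen hPc hPo (hQo.union hWo)
      (Disjoint.union_right hPQ hPW) hcompl' hp
  have compQ : ∀ q ∈ Q, connectedComponentIn Cᶜ q = Q := fun q hq =>
    connectedComponentIn_eq_of_clopen hQc hQo (hPo.union hWo)
      (Disjoint.union_right hPQ.symm hQW) hcomplQ hq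
  refine ⟨compP, compQ, ?_, ?_⟩
  · rintro G ⟨⟨y, hy, rfl⟩, hGb⟩
    have : y ∈ P ∪ Q ∪ W := by rw [← hcompl]; exact hy
    rcases this with (hyP | hyQ) | hyW
    · exact Or.inl (compP y hyP)
    · exact Or.inr (compQ y hyQ)
    · exact absurd hGb (hW y hyW)
  · rintro q ⟨hq, hqu⟩
    have : q ∈ P ∪ Q ∪ W := by rw [← hcompl]; exact hq
    rcases this with (hyP | hyQ) | hyW
    · exact absurd (by rw [compP q hyP]; exact hPb) hqu
    · exact absurd (by rw [compQ q hyQ]; exact hQb) hqu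
    · exact hyW

lemma isBoundedGap_of_comp {n : ℕ} {C P : Set (Fin n → ℝ)} {p : Fin n → ℝ} (hp : p ∈ P)
    (hPC : P ⊆ Cᶜ) (hcomp : connectedComponentIn Cᶜ p = P) (hPb : IsBounded P) :
    IsBoundedGap C P :=
  ⟨⟨p, hPC hp, hcomp.symm⟩, hPb⟩

end Helpers3
section Helpers4

open Real Metric Set Bornology

lemma mem_ball_diff_singleton_single {n : ℕ} (c : Fin n → ℝ) {ρ a : ℝ} (hρ : 0 < ρ)
    (ha0 : a ≠ 0) (haρ : |a| < ρ) (j : Fin n) :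
    c + a • (Pi.single j 1 : Fin n → ℝ) ∈ ball c ρ \ {c} := by
  constructor
  · rw [mem_ball, dist_pi_lt_iff hρ]
    intro i
    by_cases hi : i = j <;>
      simp [Real.dist_eq, Pi.single_apply, hi, haρ, hρ]
  · simp only [mem_singleton_iff]
    intro h
    have := congrFun h j
    simp [Pi.single_apply] at this
    exact ha0 this

lemma sizeWrt_eq {n : ℕ} {β : Fin n → ℝ} (hβ : ∀ j, β j ∈ Set.Ioo (0:ℝ) 1) {βmin : ℝ}
    (hβmin : IsLeast (Set.range β) βmin) {P : Set (Fin n → ℝ)} {c : Fin n → ℝ} {ρ : ℝ}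
    (hρ : 0 < ρ) (hρ1 : ρ < 1) (hsub : ball c ρ \ {c} ⊆ P) (hsup : P ⊆ ball c ρ) :
    sizeWrt β P = 1 / Real.logb βmin ρ := by
  obtain ⟨j₀, hj₀⟩ := hβmin.1
  have hbm0 : 0 < βmin := hj₀ ▸ (hβ j₀).1
  have hbm1 : βmin < 1 := hj₀ ▸ (hβ j₀).2
  have hL : 0 < Real.logb βmin ρ := Real.logb_pos_of_base_lt_one hbm0 hbm1 hρ hρ1
  have hset : {t | 0 < t ∧ ∃ z, P ⊆ affBox β (1 / t) z} = Ici (1 / Real.logb βmin ρ) := by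
    ext t
    simp only [mem_setOf_eq, mem_Ici]
    constructor
    · rintro ⟨ht, z, hz⟩
      rw [← key_le_iff hbm0 hbm1 hρ hρ1 ht, ← hj₀]
      by_contra hcon
      push_neg at hcon
      set h := β j₀ ^ (1 / t : ℝ) with hh
      set a := (max h 0 + ρ) / 2 with ha
      have hmax : max h 0 < ρ := max_lt hcon hρ
      have ha0 : 0 < a := by
        have := le_max_right h 0; rw [ha]; linarith
      have haρ : a < ρ := by rw [ha]; linarith
      have hha : h < a := by
        have := le_max_left h 0; rw [ha]; linarith
      have hm1 := mem_ball_diff_singleton_single c (a := a) hρ (ne_of_gt ha0)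
        (by rwa [abs_of_pos ha0]) j₀
      have hm2 := mem_ball_diff_singleton_single c (a := -a) hρ (by simp [ne_of_gt ha0])
        (by rwa [abs_neg, abs_of_pos ha0]) j₀
      have h1 := hz (hsub hm1) j₀
      have h2 := hz (hsub hm2) j₀
      simp only [Pi.add_apply, Pi.smul_apply, Pi.single_eq_same, smul_eq_mul, mul_one] at h1 h2
      rw [abs_le] at h1 h2
      have : a ≤ h := by linarith [h1.2, h2.1]
      linarith
    · intro ht
      have ht0 : 0 < t := lt_of_lt_of_le (by positivity) ht
      refine ⟨ht0, c, fun p hp => ?_⟩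
      intro j
      have h1 : |p j - c j| ≤ dist p c := by
        rw [← Real.dist_eq]; exact dist_le_pi_dist p c j
      have h2 : dist p c < ρ := mem_ball.mp (hsup hp)
      have h3 : ρ ≤ βmin ^ (1 / t : ℝ) := (key_le_iff hbm0 hbm1 hρ hρ1 ht0).mpr ht
      have h4 : βmin ^ (1 / t : ℝ) ≤ β j ^ (1 / t : ℝ) :=
        Real.rpow_le_rpow hbm0.le (hβmin.2 ⟨j, rfl⟩) (by positivity)
      linarith
  rw [sizeWrt, hset, csInf_Ici]

end Helpers4
section Helpers5

open Real Metric Set Bornology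

lemma gapDist_eq {n : ℕ} {β : Fin n → ℝ} (hβ : ∀ j, β j ∈ Set.Ioo (0:ℝ) 1) {βmax : ℝ}
    (hβmax : IsGreatest (Set.range β) βmax) {C : Set (Fin n → ℝ)} (e : GapEnum β C) (m : ℕ)
    {c : Fin n → ℝ} {ρ R : ℝ} (hρ : 0 < ρ) (hρR : ρ < R) (hγ1 : R - ρ < 2) (hρ2 : ρ < 2)
    (hGsub : e.G m ⊆ ball c ρ) (hGsup : ball c ρ \ {c} ⊆ e.G m)
    (hT : ∀ q ∈ (⋃ i ∈ e.J ∩ Set.Iio m, e.G i) ∪ unboundedGap C, R < dist q c)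
    (hq : ∀ j : Fin n, ∃ σ : ℝ, |σ| = 1 ∧ ∀ b, R < b → b < R + 1 →
        c + (σ * b) • (Pi.single j 1 : Fin n → ℝ) ∈ unboundedGap C) :
    gapDist β C e m = 1 / Real.logb βmax ((R - ρ) / 2) := by
  obtain ⟨j₀, hj₀⟩ := hβmax.1
  have hbm0 : 0 < βmax := hj₀ ▸ (hβ j₀).1
  have hbm1 : βmax < 1 := hj₀ ▸ (hβ j₀).2
  set γ : ℝ := (R - ρ) / 2 with hγdef
  have hγ0 : 0 < γ := by rw [hγdef]; linarith
  have hγlt1 : γ < 1 := by rw [hγdef]; linarith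
  have hM : 0 < Real.logb βmax γ := Real.logb_pos_of_base_lt_one hbm0 hbm1 hγ0 hγlt1
  have hset : {t | 0 < t ∧ ∃ z, (affBox β (1 / t) z ∩ e.G m).Nonempty ∧
      (affBox β (1 / t) z ∩ ((⋃ i ∈ e.J ∩ Set.Iio m, e.G i) ∪ unboundedGap C)).Nonempty}
      = Ioi (1 / Real.logb βmax γ) := by
    ext t
    simp only [mem_setOf_eq, mem_Ioi]
    constructor
    · rintro ⟨ht0, z, ⟨p, hpb, hpG⟩, ⟨q, hqb, hqT⟩⟩
      have hbound : ∀ u ∈ affBox β (1 / t) z, dist u z ≤ βmax ^ (1 / t : ℝ) := by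
        intro u hu
        rw [dist_pi_le_iff (by positivity)]
        intro j
        calc dist (u j) (z j) = |u j - z j| := Real.dist_eq _ _
          _ ≤ β j ^ (1 / t : ℝ) := hu j
          _ ≤ βmax ^ (1 / t : ℝ) :=
            Real.rpow_le_rpow (hβ j).1.le (hβmax.2 ⟨j, rfl⟩) (by positivity)
      have h1 : dist p q ≤ 2 * βmax ^ (1 / t : ℝ) := by
        calc dist p q ≤ dist p z + dist z q := dist_triangle p z q
          _ ≤ βmax ^ (1 / t : ℝ) + βmax ^ (1 / t : ℝ) := by
              have := hbound p hpb
              have h2 := hbound q hqb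
              rw [dist_comm z q]; linarith
          _ = 2 * βmax ^ (1 / t : ℝ) := by ring
      have h2 : R < dist q c := hT q hqT
      have h3 : dist p c < ρ := mem_ball.mp (hGsub hpG)
      have h4 : dist q c ≤ dist q p + dist p c := dist_triangle q p c
      rw [dist_comm q p] at h4
      have h5 : γ < βmax ^ (1 / t : ℝ) := by rw [hγdef]; linarith
      exact (key_lt_iff hbm0 hbm1 hγ0 hγlt1 ht0).mp h5
    · intro ht
      have ht0 : 0 < t := lt_trans (by positivity) ht
      have hh : γ < βmax ^ (1 / t : ℝ) := (key_lt_iff hbm0 hbm1 hγ0 hγlt1 ht0).mpr ht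
      set h := βmax ^ (1 / t : ℝ) with hhdef
      set ε : ℝ := min (ρ / 2) (h - γ) with hε
      have hε0 : 0 < ε := lt_min (by linarith) (by linarith)
      have hερ : ε ≤ ρ / 2 := min_le_left _ _
      have hεh : ε ≤ h - γ := min_le_right _ _
      set a : ℝ := ρ - ε with ha
      set b : ℝ := R + ε with hb
      have ha0 : 0 < a := by rw [ha]; linarith
      have haρ : a < ρ := by rw [ha]; linarith
      have hbR : R < b := by rw [hb]; linarith
      have hbR1 : b < R + 1 := by rw [hb]; linarith
      have hba : (b - a) / 2 ≤ h := by rw [hb, ha, hγdef] at *; linarith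
      obtain ⟨σ, hσ1, hσq⟩ := hq j₀
      have hσ0 : σ ≠ 0 := by intro h0; rw [h0] at hσ1; simp at hσ1
      refine ⟨ht0, c + (σ * ((a + b) / 2)) • (Pi.single j₀ 1 : Fin n → ℝ), ?_, ?_⟩
      · refine ⟨c + (σ * a) • (Pi.single j₀ 1 : Fin n → ℝ), ?_, ?_⟩
        · intro j
          by_cases hj : j = j₀
          · subst hj
            
            simp only [Pi.add_apply, Pi.smul_apply, Pi.single_eq_same, smul_eq_mul, mul_one]
            have : c j + σ * a - (c j + σ * ((a + b) / 2)) = σ * ((a - b) / 2) := by ring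
            rw [this, abs_mul, hσ1, one_mul, abs_div, abs_of_pos (by norm_num : (0:ℝ) < 2)]
            rw [abs_sub_comm]
            rw [abs_of_pos (by linarith : (0:ℝ) < b - a)]
            rw [hj₀]
            exact hba
          · simp only [Pi.add_apply, Pi.smul_apply, Pi.single_apply, if_neg hj, smul_eq_mul,
              mul_zero, add_zero, sub_self, abs_zero]
            exact Real.rpow_nonneg (hβ j).1.le _
        · apply hGsup
          apply mem_ball_diff_singleton_single c hρ
          · exact mul_ne_zero hσ0 (ne_of_gt ha0)
          · rw [abs_mul, hσ1, one_mul, abs_of_pos ha0]; exact haρ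
      · refine ⟨c + (σ * b) • (Pi.single j₀ 1 : Fin n → ℝ), ?_, Or.inr (hσq b hbR hbR1)⟩
        intro j
        by_cases hj : j = j₀
        · subst hj
          simp only [Pi.add_apply, Pi.smul_apply, Pi.single_eq_same, smul_eq_mul, mul_one]
          have : c j + σ * b - (c j + σ * ((a + b) / 2)) = σ * ((b - a) / 2) := by ring
          rw [this, abs_mul, hσ1, one_mul, abs_div, abs_of_pos (by norm_num : (0:ℝ) < 2)]
          rw [abs_of_pos (by linarith : (0:ℝ) < b - a)]
          rw [hj₀]
          exact hba
        · simp only [Pi.add_apply, Pi.smul_apply, Pi.single_apply, if_neg hj, smul_eq_mul,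
            mul_zero, add_zero, sub_self, abs_zero]
          exact Real.rpow_nonneg (hβ j).1.le _
  rw [gapDist, hset, csInf_Ioi]

end Helpers5
section Helpers6

open Real Metric Set Bornology

lemma invE_one_div {L : ℝ} (hL : L ≠ 0) : invE (1/L) = (L : EReal) := by
  rw [invE, if_neg (one_div_ne_zero hL), one_div, inv_inv]

lemma notMem_closedBall_of_coord {n : ℕ} {y c : Fin n → ℝ} {R : ℝ} (j : Fin n)
    (h : R < |y j - c j|) : y ∉ closedBall c R := by
  intro hm
  rw [mem_closedBall] at hm
  have := (dist_le_pi_dist y c j).trans hm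
  rw [Real.dist_eq] at this
  linarith

lemma coord_lt_of_mem_closedBall {n : ℕ} {y c : Fin n → ℝ} {R : ℝ} (j : Fin n)
    (h : y ∈ closedBall c R) : |y j - c j| ≤ R := by
  rw [mem_closedBall] at h
  have := (dist_le_pi_dist y c j).trans h
  rwa [Real.dist_eq] at this

lemma thicknessA_eq_of {n : ℕ} {β : Fin n → ℝ} {C : Set (Fin n → ℝ)} (e : GapEnum β C)
    {L M : ℝ} (hL : 0 < L) (hM : 0 < M)
    (hsize : ∀ k ∈ e.J, sizeWrt β (e.G k) = 1 / L)
    (hgd : ∀ k ∈ e.J, gapDist β C e k = 1 / M)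
    (hne : e.J.Nonempty) :
    thicknessA β C e = ((L - M : ℝ) : EReal) := by
  have hterm : ∀ k ∈ e.J, invE (sizeWrt β (e.G k)) - invE (gapDist β C e k)
      = ((L - M : ℝ) : EReal) := by
    intro k hk
    rw [hsize k hk, hgd k hk, invE_one_div hL.ne', invE_one_div hM.ne', ← EReal.coe_sub]
  rw [thicknessA, if_neg hne.ne_empty, if_neg]
  · apply le_antisymm
    · obtain ⟨k, hk⟩ := hne
      exact le_of_le_of_eq (iInf₂_le k hk) (hterm k hk)
    · exact le_iInf₂ fun k hk => (hterm k hk).ge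
  · rintro ⟨k, hk, h0⟩
    rw [hgd k hk] at h0
    exact absurd h0 (one_div_ne_zero hM.ne')

lemma abs_grow {w σ τ : ℝ} (hσ : σ = if 0 ≤ w then 1 else -1) (hτ : 0 ≤ τ) :
    |w| ≤ |w + τ * σ| := by
  split_ifs at hσ with h
  · rw [hσ]; rw [abs_of_nonneg h, abs_of_nonneg (by linarith)]; linarith
  · push_neg at h
    rw [hσ]
    rw [abs_of_neg h, abs_of_neg (by nlinarith)]
    linarith

end Helpers6

section Helpers7
open Real Metric Set Bornology

lemma exists_coord_of_notMem_closedBall {n : ℕ} {y c : Fin n → ℝ} {R : ℝ} (hR : 0 ≤ R)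
    (h : y ∉ Metric.closedBall c R) : ∃ j, R < |y j - c j| := by
  by_contra hcon
  push_neg at hcon
  apply h
  rw [Metric.mem_closedBall, dist_pi_le_iff hR]
  intro j
  rw [Real.dist_eq]
  exact hcon j

lemma single_coord {n : ℕ} (c : Fin n → ℝ) (u : ℝ) (j k : Fin n) :
    (c + u • (Pi.single j 1 : Fin n → ℝ)) k = c k + (if k = j then u else 0) := by
  by_cases h : k = j <;> simp [Pi.single_apply, h]

end Helpers7
set_option maxHeartbeats 1000000 in
lemma thickness_case1 {n : ℕ} (hn : 2 ≤ n) (t s r : ℝ)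
    (ht : 0 < t) (hts : t < s) (hsr : s < r) (hr : r < 1 / 4)
    (x : Fin n → ℝ) (hx : x = fun j : Fin n => if (j : ℕ) = 0 then (3 / 4 : ℝ) else 0)
    (β : Fin n → ℝ) (hβ : ∀ j, β j ∈ Set.Ioo (0 : ℝ) 1)
    (βmin βmax : ℝ) (hβmin : IsLeast (Set.range β) βmin)
    (hβmax : IsGreatest (Set.range β) βmax)
    (C₁ : Set (Fin n → ℝ))
    (hC₁ : C₁ = (closedBall x (1 / 4) \ ball x r) ∪ {x} ∪
      (closedBall (-x) (1 / 4) \ ball (-x) r)) :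
    ∀ e₁ : GapEnum β C₁, thicknessA β C₁ e₁ =
      ((Real.logb βmin r - Real.logb βmax (1 / 8 - r / 2) : ℝ) : EReal) := by

  classical
  have hs0 : 0 < s := lt_trans ht hts
  have hr0 : 0 < r := lt_trans hs0 hsr
  have hs4 : s < 1/4 := lt_trans hsr hr
  have ht4 : t < 1/4 := lt_trans hts hs4
  have h0n : 0 < n := by omega
  set j0 : Fin n := ⟨0, h0n⟩ with hj0def
  set i1 : Fin n := ⟨1, hn⟩ with hi1def
  have hx0 : x j0 = 3/4 := by rw [hx]; simp [hj0def]
  have hxo : ∀ j : Fin n, j ≠ j0 → x j = 0 := by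
    intro j hj
    rw [hx]
    simp only
    rw [if_neg]
    intro hval
    exact hj (Fin.ext hval)
  have hxi1 : x i1 = 0 := hxo i1 (by simp [hi1def, hj0def, Fin.ext_iff])
  have hnx0 : (-x) j0 = -(3/4) := by rw [Pi.neg_apply, hx0]
  have hnxi1 : (-x) i1 = 0 := by rw [Pi.neg_apply, hxi1, neg_zero]
  obtain ⟨jmin, hjmin⟩ := hβmin.1
  obtain ⟨jmax, hjmax⟩ := hβmax.1
  have hm0 : 0 < βmin := hjmin ▸ (hβ jmin).1
  have hm1 : βmin < 1 := hjmin ▸ (hβ jmin).2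
  have hM0 : 0 < βmax := hjmax ▸ (hβ jmax).1
  have hM1 : βmax < 1 := hjmax ▸ (hβ jmax).2
  intro e
  set P1 : Set (Fin n → ℝ) := ball x r \ {x} with hP1
  set Q1 : Set (Fin n → ℝ) := ball (-x) r with hQ1
  set W1 : Set (Fin n → ℝ) := (closedBall x (1/4))ᶜ ∩ (closedBall (-x) (1/4))ᶜ with hW1
  have hb1 : ball x r ⊆ closedBall x (1/4) :=
    ball_subset_closedBall.trans (closedBall_subset_closedBall hr.le)
  have hb2 : ball (-x) r ⊆ closedBall (-x) (1/4) :=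
    ball_subset_closedBall.trans (closedBall_subset_closedBall hr.le)
  have hsep : ∀ y : Fin n → ℝ, y ∈ closedBall x (1/4) → y ∉ closedBall (-x) (1/4) := by
    intro y h1 h2
    have a1 := coord_lt_of_mem_closedBall j0 h1
    have a2 := coord_lt_of_mem_closedBall j0 h2
    rw [hx0, abs_le] at a1
    rw [hnx0, abs_le] at a2
    linarith [a1.1, a2.2]
  have hcompl : C₁ᶜ = P1 ∪ Q1 ∪ W1 := by
    rw [hC₁]
    ext y
    simp only [mem_compl_iff, mem_union, mem_diff, mem_singleton_iff, mem_inter_iff,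
      mem_compl_iff, hP1, hQ1, hW1]
    have f1 : y ∈ ball x r → y ∈ closedBall x (1/4) := fun h => hb1 h
    have f2 : y ∈ ball (-x) r → y ∈ closedBall (-x) (1/4) := fun h => hb2 h
    have f3 : y ∈ closedBall x (1/4) → ¬ y ∈ closedBall (-x) (1/4) := hsep y
    have f4 : y = x → y ∈ ball x r := fun h => h ▸ mem_ball_self hr0
    constructor
    · intro h
      push_neg at h
      obtain ⟨⟨hA, hx'⟩, hC⟩ := h
      by_cases h1 : y ∈ ball x r
      · exact Or.inl (Or.inl ⟨h1, hx'⟩)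
      · by_cases h2 : y ∈ ball (-x) r
        · exact Or.inl (Or.inr h2)
        · exact Or.inr ⟨fun hB => h1 (hA hB), fun hB => h2 (hC hB)⟩
    · rintro ((⟨h1, h2⟩ | h) | ⟨h1, h2⟩) <;> push_neg
      · exact ⟨⟨fun _ => h1, h2⟩, fun hB => (f3 (f1 h1) hB).elim⟩
      · exact ⟨⟨fun hB => (f3 hB (f2 h)).elim, fun he => (f3 (f1 (f4 he)) (f2 h)).elim⟩,
          fun _ => h⟩
      · exact ⟨⟨fun hB => (h1 hB).elim, fun he => (h1 (f1 (f4 he))).elim⟩,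
          fun hB => (h2 hB).elim⟩
  -- rays from W1
  have hWray : ∀ w ∈ W1, w ∈ unboundedGap C₁ := by
    intro w hw
    set σ : ℝ := if 0 ≤ w i1 then 1 else -1 with hσ
    have hσ1 : |σ| = 1 := by rw [hσ]; split_ifs <;> norm_num
    set d : Fin n → ℝ := σ • (Pi.single i1 1 : Fin n → ℝ) with hd
    have hdi1 : 1 ≤ |d i1| := by
      rw [hd]; simp [hσ1]
    apply mem_unboundedGap_of_ray i1 hdi1
    intro τ hτ
    obtain ⟨ja, hja⟩ := exists_coord_of_notMem_closedBall (by norm_num) hw.1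
    obtain ⟨jb, hjb⟩ := exists_coord_of_notMem_closedBall (by norm_num) hw.2
    have hcoord : ∀ k : Fin n, (w + τ • d) k = w k + (if k = i1 then τ * σ else 0) := by
      intro k
      rw [hd, smul_smul]
      rw [single_coord w (τ * σ) i1 k]
    have hgrow : ∀ (c : Fin n → ℝ), c i1 = 0 → ∀ k : Fin n, 1/4 < |w k - c k| →
        1/4 < |(w + τ • d) k - c k| := by
      intro c hc k hk
      rw [hcoord k]
      by_cases hki : k = i1
      · subst hki
        rw [if_pos rfl, hc, sub_zero]
        rw [hc, sub_zero] at hk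
        exact lt_of_lt_of_le hk (abs_grow hσ hτ)
      · rw [if_neg hki, add_zero]
        exact hk
    have hW1mem : (w + τ • d) ∈ W1 := by
      refine ⟨notMem_closedBall_of_coord ja (hgrow x hxi1 ja hja),
        notMem_closedBall_of_coord jb (hgrow (-x) hnxi1 jb hjb)⟩
    rw [mem_compl_iff]
    intro hC
    have : (w + τ • d) ∈ C₁ᶜ := by rw [hcompl]; exact Or.inr hW1mem
    exact this hC
  have hWunb : ∀ w ∈ W1, ¬ Bornology.IsBounded (connectedComponentIn C₁ᶜ w) :=
    fun w hw => (hWray w hw).2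
  have hP1o : IsOpen P1 := isOpen_ball.sdiff isClosed_singleton
  have hQ1o : IsOpen Q1 := isOpen_ball
  have hW1o : IsOpen W1 :=
    (isOpen_compl_iff.mpr Metric.isClosed_closedBall).inter (isOpen_compl_iff.mpr Metric.isClosed_closedBall)
  have hP1B1 : P1 ⊆ closedBall x (1/4) := (diff_subset).trans hb1
  have hQ1B2 : Q1 ⊆ closedBall (-x) (1/4) := hb2
  have hPQ : Disjoint P1 Q1 := by
    rw [Set.disjoint_left]
    intro a ha hb
    exact hsep a (hP1B1 ha) (hQ1B2 hb)
  have hPW : Disjoint P1 W1 := by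
    rw [Set.disjoint_left]
    intro a ha hb
    exact hb.1 (hP1B1 ha)
  have hQW : Disjoint Q1 W1 := by
    rw [Set.disjoint_left]
    intro a ha hb
    exact hb.2 (hQ1B2 ha)
  have hP1c : IsPreconnected P1 := isPreconnected_ball_diff_singleton hn x hr0
  have hQ1c : IsPreconnected Q1 := (convex_ball (-x) r).isPreconnected
  have hP1b : Bornology.IsBounded P1 := isBounded_ball.subset diff_subset
  have hQ1b : Bornology.IsBounded Q1 := isBounded_ball
  obtain ⟨compP, compQ, hclass, hunbW⟩ := gap_classify hcompl hP1o hQ1o hW1o hPQ hPW hQW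
    hP1c hQ1c hP1b hQ1b hWunb
  have hP1CC : P1 ⊆ C₁ᶜ := by rw [hcompl]; exact fun y hy => Or.inl (Or.inl hy)
  have hQ1CC : Q1 ⊆ C₁ᶜ := by rw [hcompl]; exact fun y hy => Or.inl (Or.inr hy)
  have hxP1 : x + (r/2) • (Pi.single j0 1 : Fin n → ℝ) ∈ P1 :=
    mem_ball_diff_singleton_single x hr0 (by positivity)
      (by rw [abs_of_pos (by positivity)]; linarith) j0
  have hgapP1 : IsBoundedGap C₁ P1 :=
    isBoundedGap_of_comp hxP1 hP1CC (compP _ hxP1) hP1b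
  have hne : e.J.Nonempty := by
    obtain ⟨k, hk, -⟩ := e.surj P1 hgapP1
    exact ⟨k, hk⟩
  -- unboundedGap points for centers
  have hqx : ∀ j : Fin n, ∀ b : ℝ, 1/4 < b → b < 1/4 + 1 →
      x + (1 * b) • (Pi.single j 1 : Fin n → ℝ) ∈ unboundedGap C₁ := by
    intro j b hb hb'
    apply mem_unboundedGap_of_ray j (d := (Pi.single j 1 : Fin n → ℝ)) (by simp)
    intro τ hτ
    have heq : x + (1 * b) • (Pi.single j 1 : Fin n → ℝ) + τ • (Pi.single j 1 : Fin n → ℝ)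
        = x + (b + τ) • (Pi.single j 1 : Fin n → ℝ) := by
      rw [one_mul, add_assoc, ← add_smul]
    rw [heq]
    have hbτ : 1/4 < b + τ := by linarith
    have h1 : x + (b + τ) • (Pi.single j 1 : Fin n → ℝ) ∉ closedBall x (1/4) := by
      apply notMem_closedBall_of_coord j
      rw [single_coord, if_pos rfl]
      rw [add_sub_cancel_left]
      rw [abs_of_pos (by linarith)]
      exact hbτ
    have h2 : x + (b + τ) • (Pi.single j 1 : Fin n → ℝ) ∉ closedBall (-x) (1/4) := by
      apply notMem_closedBall_of_coord j0
      rw [single_coord, hnx0, hx0]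
      have : (3:ℝ)/4 + (if j0 = j then b + τ else 0) - -(3/4) ≥ 3/2 := by
        split_ifs <;> linarith
      rw [abs_of_pos (by linarith)]
      linarith
    rw [mem_compl_iff]
    intro hC
    have : x + (b + τ) • (Pi.single j 1 : Fin n → ℝ) ∈ C₁ᶜ := by
      rw [hcompl]; exact Or.inr ⟨h1, h2⟩
    exact this hC
  have hqnx : ∀ j : Fin n, ∀ b : ℝ, 1/4 < b → b < 1/4 + 1 →
      (-x) + ((-1) * b) • (Pi.single j 1 : Fin n → ℝ) ∈ unboundedGap C₁ := by
    intro j b hb hb'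
    apply mem_unboundedGap_of_ray j (d := (-1 : ℝ) • (Pi.single j 1 : Fin n → ℝ))
      (by simp)
    intro τ hτ
    have heq : (-x) + ((-1) * b) • (Pi.single j 1 : Fin n → ℝ)
        + τ • ((-1 : ℝ) • (Pi.single j 1 : Fin n → ℝ))
        = (-x) + (-(b + τ)) • (Pi.single j 1 : Fin n → ℝ) := by
      rw [smul_comm, ← smul_assoc, add_assoc, ← add_smul]
      norm_num
      ring_nf
    rw [heq]
    have hbτ : 1/4 < b + τ := by linarith
    have h1 : (-x) + (-(b + τ)) • (Pi.single j 1 : Fin n → ℝ) ∉ closedBall (-x) (1/4) := by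
      apply notMem_closedBall_of_coord j
      rw [single_coord, if_pos rfl, add_sub_cancel_left, abs_neg, abs_of_pos (by linarith)]
      exact hbτ
    have h2 : (-x) + (-(b + τ)) • (Pi.single j 1 : Fin n → ℝ) ∉ closedBall x (1/4) := by
      apply notMem_closedBall_of_coord j0
      rw [single_coord, hnx0, hx0]
      have : -(3/4 : ℝ) + (if j0 = j then -(b+τ) else 0) - 3/4 ≤ -3/2 := by
        split_ifs <;> linarith
      rw [abs_of_neg (by linarith)]
      linarith
    rw [mem_compl_iff]
    intro hC
    have : (-x) + (-(b + τ)) • (Pi.single j 1 : Fin n → ℝ) ∈ C₁ᶜ := by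
      rw [hcompl]; exact Or.inr ⟨h2, h1⟩
    exact this hC
  -- size and gap distance for every k ∈ J
  have hsize : ∀ k ∈ e.J, sizeWrt β (e.G k) = 1 / Real.logb βmin r := by
    intro k hk
    rcases hclass _ (e.isGap k hk) with h | h
    · rw [h, hP1]
      exact sizeWrt_eq hβ hβmin hr0 (by linarith) subset_rfl diff_subset
    · rw [h, hQ1]
      exact sizeWrt_eq hβ hβmin hr0 (by linarith) diff_subset subset_rfl
  have hgd : ∀ k ∈ e.J, gapDist β C₁ e k = 1 / Real.logb βmax ((1/4 - r)/2) := by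
    intro k hk
    rcases hclass _ (e.isGap k hk) with h | h
    · -- G k = P1, center x
      have := gapDist_eq hβ hβmax e k (c := x) (ρ := r) (R := 1/4) hr0 hr (by linarith)
        (by linarith) (h ▸ diff_subset) (h ▸ subset_rfl) ?_ ?_
      · convert this using 3 <;> ring
      · intro q hq
        rcases hq with hq | hq
        · simp only [mem_iUnion, exists_prop] at hq
          obtain ⟨i, ⟨hiJ, him⟩, hqi⟩ := hq
          rcases hclass _ (e.isGap i hiJ) with h2 | h2
          · exfalso
            have : i = k := e.inj i hiJ k hk (by rw [h2, h])
            rw [this] at him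
            exact absurd him (lt_irrefl k)
          · rw [h2, hQ1] at hqi
            have hq0 : |q j0 - (-x) j0| ≤ dist q (-x) := by
              rw [← Real.dist_eq]; exact dist_le_pi_dist q (-x) j0
            have hq1 : dist q (-x) < r := mem_ball.mp hqi
            rw [hnx0] at hq0
            rcases abs_lt.mp (lt_of_le_of_lt hq0 hq1) with ⟨ha, hb⟩
            have hcoord : 1/4 < |q j0 - x j0| := by
              rw [hx0, lt_abs]
              right
              linarith
            calc 1/4 < |q j0 - x j0| := hcoord
              _ ≤ dist q x := by rw [← Real.dist_eq]; exact dist_le_pi_dist q x j0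
        · have hqW := hunbW hq
          have := hqW.1
          rw [mem_compl_iff, mem_closedBall] at this
          linarith [not_le.mp this]
      · intro j
        exact ⟨1, by norm_num, fun b hb hb' => hqx j b hb hb'⟩
    · -- G k = Q1, center -x
      have := gapDist_eq hβ hβmax e k (c := -x) (ρ := r) (R := 1/4) hr0 hr (by linarith)
        (by linarith) (h ▸ subset_rfl) (h ▸ diff_subset) ?_ ?_
      · convert this using 3 <;> ring
      · intro q hq
        rcases hq with hq | hq
        · simp only [mem_iUnion, exists_prop] at hq
          obtain ⟨i, ⟨hiJ, him⟩, hqi⟩ := hq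
          rcases hclass _ (e.isGap i hiJ) with h2 | h2
          · rw [h2, hP1] at hqi
            have hq0 : |q j0 - x j0| ≤ dist q x := by
              rw [← Real.dist_eq]; exact dist_le_pi_dist q x j0
            have hq1 : dist q x < r := mem_ball.mp hqi.1
            rw [hx0] at hq0
            rcases abs_lt.mp (lt_of_le_of_lt hq0 hq1) with ⟨ha, hb⟩
            have hcoord : 1/4 < |q j0 - (-x) j0| := by
              rw [hnx0, lt_abs]
              left
              linarith
            calc 1/4 < |q j0 - (-x) j0| := hcoord
              _ ≤ dist q (-x) := by rw [← Real.dist_eq]; exact dist_le_pi_dist q (-x) j0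
          · exfalso
            have : i = k := e.inj i hiJ k hk (by rw [h2, h])
            rw [this] at him
            exact absurd him (lt_irrefl k)
        · have hqW := hunbW hq
          have := hqW.2
          rw [mem_compl_iff, mem_closedBall] at this
          linarith [not_le.mp this]
      · intro j
        exact ⟨-1, by norm_num, fun b hb hb' => hqnx j b hb hb'⟩
  have hLpos : 0 < Real.logb βmin r :=
    Real.logb_pos_of_base_lt_one hm0 hm1 hr0 (by linarith)
  have hMpos : 0 < Real.logb βmax ((1/4 - r)/2) :=
    Real.logb_pos_of_base_lt_one hM0 hM1 (by linarith) (by linarith)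
  have := thicknessA_eq_of e hLpos hMpos hsize hgd hne
  rw [this]
  congr 2
  ring

set_option maxHeartbeats 1000000 in
lemma thickness_case2 {n : ℕ} (hn : 2 ≤ n) (t s r : ℝ)
    (ht : 0 < t) (hts : t < s) (hsr : s < r) (hr : r < 1 / 4)
    (x : Fin n → ℝ) (hx : x = fun j : Fin n => if (j : ℕ) = 0 then (3 / 4 : ℝ) else 0)
    (β : Fin n → ℝ) (hβ : ∀ j, β j ∈ Set.Ioo (0 : ℝ) 1)
    (βmin βmax : ℝ) (hβmin : IsLeast (Set.range β) βmin)
    (hβmax : IsGreatest (Set.range β) βmax)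
    (C₂ : Set (Fin n → ℝ))
    (hC₂ : C₂ = (closedBall x s \ ball x t) ∪ {-x}) :
    ∀ e₂ : GapEnum β C₂, thicknessA β C₂ e₂ =
      ((Real.logb βmin t - Real.logb βmax ((s - t) / 2) : ℝ) : EReal) := by

  classical
  have hs0 : 0 < s := lt_trans ht hts
  have hr0 : 0 < r := lt_trans hs0 hsr
  have hs4 : s < 1/4 := lt_trans hsr hr
  have ht4 : t < 1/4 := lt_trans hts hs4
  have h0n : 0 < n := by omega
  set j0 : Fin n := ⟨0, h0n⟩ with hj0def
  set i1 : Fin n := ⟨1, hn⟩ with hi1def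
  have hx0 : x j0 = 3/4 := by rw [hx]; simp [hj0def]
  have hxo : ∀ j : Fin n, j ≠ j0 → x j = 0 := by
    intro j hj
    rw [hx]
    simp only
    rw [if_neg]
    intro hval
    exact hj (Fin.ext hval)
  have hxi1 : x i1 = 0 := hxo i1 (by simp [hi1def, hj0def, Fin.ext_iff])
  have hnx0 : (-x) j0 = -(3/4) := by rw [Pi.neg_apply, hx0]
  have hnxi1 : (-x) i1 = 0 := by rw [Pi.neg_apply, hxi1, neg_zero]
  obtain ⟨jmin, hjmin⟩ := hβmin.1
  obtain ⟨jmax, hjmax⟩ := hβmax.1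
  have hm0 : 0 < βmin := hjmin ▸ (hβ jmin).1
  have hm1 : βmin < 1 := hjmin ▸ (hβ jmin).2
  have hM0 : 0 < βmax := hjmax ▸ (hβ jmax).1
  have hM1 : βmax < 1 := hjmax ▸ (hβ jmax).2
  intro e
  set P2 : Set (Fin n → ℝ) := ball x t with hP2
  set W2 : Set (Fin n → ℝ) := (closedBall x s)ᶜ ∩ ({-x} : Set (Fin n → ℝ))ᶜ with hW2
  have fb : ball x t ⊆ closedBall x s :=
    ball_subset_closedBall.trans (closedBall_subset_closedBall hts.le)
  have fnx : -x ∉ closedBall x s := by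
    apply notMem_closedBall_of_coord j0
    rw [hnx0, hx0]
    rw [abs_of_neg (by norm_num)]
    linarith
  have hcompl : C₂ᶜ = P2 ∪ (∅ : Set (Fin n → ℝ)) ∪ W2 := by
    rw [hC₂]
    ext y
    simp only [mem_compl_iff, mem_union, mem_diff, mem_singleton_iff, mem_inter_iff,
      mem_compl_iff, hP2, hW2, mem_empty_iff_false, or_false]
    constructor
    · intro h
      push_neg at h
      obtain ⟨hA, hne⟩ := h
      by_cases h1 : y ∈ ball x t
      · exact Or.inl h1
      · exact Or.inr ⟨fun hB => h1 (hA hB), hne⟩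
    · rintro (h | ⟨h1, h2⟩) <;> push_neg
      · exact ⟨fun _ => h, fun he => fnx (he ▸ fb h)⟩
      · exact ⟨fun hB => (h1 hB).elim, h2⟩
  have hWray : ∀ w ∈ W2, w ∈ unboundedGap C₂ := by
    intro w hw
    set σ : ℝ := if 0 ≤ w i1 then 1 else -1 with hσ
    have hσ1 : |σ| = 1 := by rw [hσ]; split_ifs <;> norm_num
    set d : Fin n → ℝ := σ • (Pi.single i1 1 : Fin n → ℝ) with hd
    have hdi1 : 1 ≤ |d i1| := by rw [hd]; simp [hσ1]
    apply mem_unboundedGap_of_ray i1 hdi1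
    intro τ hτ
    obtain ⟨ja, hja⟩ := exists_coord_of_notMem_closedBall hs0.le hw.1
    have hcoord : ∀ k : Fin n, (w + τ • d) k = w k + (if k = i1 then τ * σ else 0) := by
      intro k
      rw [hd, smul_smul, single_coord w (τ * σ) i1 k]
    have h1 : (w + τ • d) ∉ closedBall x s := by
      apply notMem_closedBall_of_coord ja
      rw [hcoord ja]
      by_cases hki : ja = i1
      · subst hki
        rw [if_pos rfl, hxi1, sub_zero]
        rw [hxi1, sub_zero] at hja
        exact lt_of_lt_of_le hja (abs_grow hσ hτ)
      · rw [if_neg hki, add_zero]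
        exact hja
    have h2 : (w + τ • d) ≠ -x := by
      rcases eq_or_lt_of_le hτ with h0 | h0
      · rw [← h0]
        simpa using hw.2
      · intro heq
        have := congrFun heq i1
        rw [hcoord i1, if_pos rfl, hnxi1] at this
        rw [hσ] at this
        split_ifs at this with hwi <;> nlinarith
    rw [mem_compl_iff]
    intro hC
    have : (w + τ • d) ∈ C₂ᶜ := by
      rw [hcompl]
      exact Or.inr ⟨h1, by simpa using h2⟩
    exact this hC
  have hWunb : ∀ w ∈ W2, ¬ Bornology.IsBounded (connectedComponentIn C₂ᶜ w) :=
    fun w hw => (hWray w hw).2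
  have hP2o : IsOpen P2 := isOpen_ball
  have hW2o : IsOpen W2 :=
    (isOpen_compl_iff.mpr Metric.isClosed_closedBall).inter
      (isOpen_compl_iff.mpr isClosed_singleton)
  have hPW : Disjoint P2 W2 := by
    rw [Set.disjoint_left]
    intro a ha hb
    exact hb.1 (fb ha)
  obtain ⟨compP, -, hclass, hunbW⟩ := gap_classify hcompl hP2o isOpen_empty hW2o
    (disjoint_empty _) hPW (empty_disjoint _) (convex_ball x t).isPreconnected
    isPreconnected_empty isBounded_ball Bornology.isBounded_empty hWunb
  have hclass2 : ∀ k ∈ e.J, e.G k = P2 := by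
    intro k hk
    rcases hclass _ (e.isGap k hk) with h | h
    · exact h
    · exfalso
      obtain ⟨⟨y, hy, hGk⟩, -⟩ := e.isGap k hk
      have : y ∈ e.G k := hGk ▸ mem_connectedComponentIn hy
      rw [h] at this
      exact this
  have hP2CC : P2 ⊆ C₂ᶜ := by rw [hcompl]; exact fun y hy => Or.inl (Or.inl hy)
  have hxP2 : x + (t/2) • (Pi.single j0 1 : Fin n → ℝ) ∈ P2 :=
    (mem_ball_diff_singleton_single x ht (by positivity)
      (by rw [abs_of_pos (by positivity)]; linarith) j0).1
  have hgapP2 : IsBoundedGap C₂ P2 :=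
    isBoundedGap_of_comp hxP2 hP2CC (compP _ hxP2) isBounded_ball
  have hne : e.J.Nonempty := by
    obtain ⟨k, hk, -⟩ := e.surj P2 hgapP2
    exact ⟨k, hk⟩
  have hqx : ∀ j : Fin n, ∀ b : ℝ, s < b → b < s + 1 →
      x + (1 * b) • (Pi.single j 1 : Fin n → ℝ) ∈ unboundedGap C₂ := by
    intro j b hb hb'
    apply mem_unboundedGap_of_ray j (d := (Pi.single j 1 : Fin n → ℝ)) (by simp)
    intro τ hτ
    have heq : x + (1 * b) • (Pi.single j 1 : Fin n → ℝ) + τ • (Pi.single j 1 : Fin n → ℝ)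
        = x + (b + τ) • (Pi.single j 1 : Fin n → ℝ) := by
      rw [one_mul, add_assoc, ← add_smul]
    rw [heq]
    have hbτ : s < b + τ := by linarith
    have h1 : x + (b + τ) • (Pi.single j 1 : Fin n → ℝ) ∉ closedBall x s := by
      apply notMem_closedBall_of_coord j
      rw [single_coord, if_pos rfl, add_sub_cancel_left, abs_of_pos (by linarith)]
      exact hbτ
    have h2 : x + (b + τ) • (Pi.single j 1 : Fin n → ℝ) ≠ -x := by
      intro heq2
      have := congrFun heq2 j0
      rw [single_coord, hnx0, hx0] at this
      split_ifs at this <;> linarith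
    rw [mem_compl_iff]
    intro hC
    have : x + (b + τ) • (Pi.single j 1 : Fin n → ℝ) ∈ C₂ᶜ := by
      rw [hcompl]
      exact Or.inr ⟨h1, by simpa using h2⟩
    exact this hC
  have hsize : ∀ k ∈ e.J, sizeWrt β (e.G k) = 1 / Real.logb βmin t := by
    intro k hk
    rw [hclass2 k hk, hP2]
    exact sizeWrt_eq hβ hβmin ht (by linarith) diff_subset subset_rfl
  have hgd : ∀ k ∈ e.J, gapDist β C₂ e k = 1 / Real.logb βmax ((s - t)/2) := by
    intro k hk
    refine gapDist_eq hβ hβmax e k (c := x) (ρ := t) (R := s) ht hts (by linarith)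
      (by linarith) ((hclass2 k hk).symm ▸ subset_rfl)
      ((hclass2 k hk).symm ▸ (diff_subset : ball x t \ {x} ⊆ ball x t)) ?_ ?_
    · intro q hq
      rcases hq with hq | hq
      · simp only [mem_iUnion, exists_prop] at hq
        obtain ⟨i, ⟨hiJ, him⟩, hqi⟩ := hq
        exfalso
        have : i = k := e.inj i hiJ k hk (by rw [hclass2 i hiJ, hclass2 k hk])
        rw [this] at him
        exact absurd him (lt_irrefl k)
      · have hqW := hunbW hq
        have := hqW.1
        rw [mem_compl_iff, mem_closedBall] at this
        linarith [not_le.mp this]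
    · intro j
      exact ⟨1, by norm_num, fun b hb hb' => hqx j b hb hb'⟩
  have hLpos : 0 < Real.logb βmin t :=
    Real.logb_pos_of_base_lt_one hm0 hm1 ht (by linarith)
  have hMpos : 0 < Real.logb βmax ((s - t)/2) :=
    Real.logb_pos_of_base_lt_one hM0 hM1 (by linarith) (by linarith)
  exact thicknessA_eq_of e hLpos hMpos hsize hgd hne

/-- the affine thickness of the explicit counterexample sets. -/
theorem thickness_of_counterexample_sets (n : ℕ) (hn : 2 ≤ n) (t s r : ℝ)
    (ht : 0 < t) (hts : t < s) (hsr : s < r) (hr : r < 1 / 4)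
    (x : Fin n → ℝ) (hx : x = fun j : Fin n => if (j : ℕ) = 0 then (3 / 4 : ℝ) else 0)
    (C₁ C₂ : Set (Fin n → ℝ))
    (hC₁ : C₁ = (closedBall x (1 / 4) \ ball x r) ∪ {x} ∪
      (closedBall (-x) (1 / 4) \ ball (-x) r))
    (hC₂ : C₂ = (closedBall x s \ ball x t) ∪ {-x})
    (β : Fin n → ℝ) (hβ : ∀ j, β j ∈ Set.Ioo (0 : ℝ) 1)
    (βmin βmax : ℝ) (hβmin : IsLeast (Set.range β) βmin)
    (hβmax : IsGreatest (Set.range β) βmax) :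
    (∀ e₁ : GapEnum β C₁, thicknessA β C₁ e₁ =
      ((Real.logb βmin r - Real.logb βmax (1 / 8 - r / 2) : ℝ) : EReal)) ∧
    (∀ e₂ : GapEnum β C₂, thicknessA β C₂ e₂ =
      ((Real.logb βmin t - Real.logb βmax ((s - t) / 2) : ℝ) : EReal)) := by
  exact ⟨thickness_case1 hn t s r ht hts hsr hr x hx β hβ βmin βmax hβmin hβmax C₁ hC₁,
    thickness_case2 hn t s r ht hts hsr hr x hx β hβ βmin βmax hβmin hβmax C₂ hC₂⟩
end
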